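/- arXiv:1303.3159 — 5 statements merged into one kernel-verified Lean document; each statement's English description precedes it below -/
import Mathlib

section
/- Let λ>0, β>0 and m a positive integer with m−1 ≤ β < m. There exist complex constants b_k^λ, for integers 0 ≤ k ≤ (m+1)/2, such that for all t,x,y>0: t^β ∂_t^β P_t^λ(x,y) = Σ_{k=0}^{⌊(m+1)/2⌋} b_k^λ t^{−2λ−1} (xy)^λ ∫_0^π (sin θ)^{2λ−1} φ^{λ,k}( √((x−y)² + 2xy(1−cos θ)) / t ) dθ. -/
open MeasureTheory Real Set

noncomputable section

/-- The Segovia–Wheeden fractional derivative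
`∂_t^β F(t) = (e^{-iπ(m-β)}/Γ(m-β)) ∫_0^∞ ∂_t^m F(t+s) s^{m-β-1} ds`. -/
def fracDeriv (β : ℝ) (m : ℕ) (F : ℝ → ℂ) (t : ℝ) : ℂ :=
  (Complex.exp (-(π : ℂ) * Complex.I * ((m : ℂ) - (β : ℂ))) /
      ((Real.Gamma ((m : ℝ) - β) : ℝ) : ℂ)) *
    ∫ s in Set.Ioi (0 : ℝ), iteratedDeriv m F (t + s) * ((s ^ ((m : ℝ) - β - 1) : ℝ) : ℂ)

/-- The Bessel Poisson kernel `P_t^λ(x,y)`. -/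
def besselPoissonKernel (lam t x y : ℝ) : ℝ :=
  (2 * lam * (x * y) ^ lam * t / π) *
    ∫ θ in Set.Ioo 0 π,
      Real.sin θ ^ (2 * lam - 1) /
        ((x - y) ^ 2 + t ^ 2 + 2 * x * y * (1 - Real.cos θ)) ^ (lam + 1)

/-- The Bessel Poisson integral `P_t^λ(f)(x)`. -/
def besselPoisson (lam : ℝ) (f : ℝ → ℂ) (t x : ℝ) : ℂ :=
  ∫ y in Set.Ioi (0 : ℝ), (besselPoissonKernel lam t x y : ℂ) * f y

/-- The function `φ^{λ,k}`. -/
def phiLam (lam β : ℝ) (m k : ℕ) (z : ℝ) : ℝ :=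
  ∫ v in Set.Ioi (0 : ℝ),
    (1 + v) ^ ((m : ℝ) + 1 - 2 * (k : ℝ)) * v ^ ((m : ℝ) - β - 1) /
      ((1 + v) ^ 2 + z ^ 2) ^ (lam + (m : ℝ) - (k : ℝ) + 1)

/-!
Write `D = (x - y)² + 2xy(1 - cos θ)`, so that
`P_u^λ(x,y) = (2λ(xy)^λ/π) ∫₀^π sin^{2λ-1}θ · u (D + u²)^{-λ-1} dθ`.
Differentiating under the integral sign, `∂ᵤᵐ [u (D + u²)^{-λ-1}]` is a combination
`∑ₖ a_{m,k} u^{m+1-2k} (D + u²)^{-(λ+m-k+1)}` whose coefficients vanish for `2k > m + 1`.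
In the fractional derivative the `s`- and `θ`-integrals are swapped (Fubini), and the
substitution `s = t v` turns `u = t + s` into `t (1 + v)`, so that the inner integral
becomes `t^{-2λ-1-β} φ^{λ,k}(√D / t)`. Hence
`b_k = e^{-iπ(m-β)} / Γ(m-β) · (2λ/π) · a_{m,k}`.
-/

open Filter Topology Function

namespace BesselPoisson

theorem mul_min_le_sin {θ : ℝ} (h₀ : 0 ≤ θ) (hπ : θ ≤ π) :
    2 / π * min θ (π - θ) ≤ sin θ := by
  rcases le_total θ (π / 2) with h | h
  · exact (mul_le_mul_of_nonneg_left (min_le_left _ _) (by positivity)).trans (mul_le_sin h₀ h)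
  · rw [← sin_pi_sub]
    exact (mul_le_mul_of_nonneg_left (min_le_right _ _) (by positivity)).trans
      (mul_le_sin (by linarith) (by linarith))

theorem integrableOn_sin_rpow {c : ℝ} (hc : -1 < c) :
    IntegrableOn (fun θ => sin θ ^ c) (Ioo 0 π) := by
  have hmeas : AEStronglyMeasurable (fun θ => sin θ ^ c) (volume.restrict (Ioo 0 π)) :=
    (continuous_sin.continuousOn.rpow_const fun θ hθ =>
      Or.inl (sin_pos_of_pos_of_lt_pi hθ.1 hθ.2).ne').aestronglyMeasurable measurableSet_Ioo
  rcases le_or_gt 0 c with hc₀ | hc₀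
  · refine Integrable.mono' (g := fun _ => 1) (integrableOn_const measure_Ioo_lt_top.ne) hmeas
      (ae_restrict_of_forall_mem measurableSet_Ioo fun θ hθ => ?_)
    have hsin := (sin_pos_of_pos_of_lt_pi hθ.1 hθ.2).le
    rw [norm_of_nonneg (rpow_nonneg hsin _)]
    exact rpow_le_one hsin (sin_le_one θ) hc₀
  -- for `c < 0`, Jordan's inequality bounds `sin θ ^ c` by the singular powers at both ends
  have hleft : IntegrableOn (fun θ : ℝ => θ ^ c) (Ioo 0 π) :=
    (intervalIntegral.intervalIntegrable_rpow' hc).1.mono_set Ioo_subset_Ioc_self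
  have hright : IntegrableOn (fun θ : ℝ => (π - θ) ^ c) (Ioo 0 π) := by
    have h :=
      ((intervalIntegral.intervalIntegrable_rpow' hc (a := 0) (b := π)).comp_sub_left π).symm
    simp only [sub_zero, sub_self] at h
    exact h.1.mono_set Ioo_subset_Ioc_self
  refine Integrable.mono' ((hleft.add hright).const_mul ((2 / π) ^ c)) hmeas
    (ae_restrict_of_forall_mem measurableSet_Ioo fun θ hθ => ?_)
  have hmin : 0 < min θ (π - θ) := lt_min hθ.1 (by linarith [hθ.2])
  have hsin := sin_pos_of_pos_of_lt_pi hθ.1 hθ.2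
  rw [norm_of_nonneg (rpow_nonneg hsin.le _)]
  calc sin θ ^ c ≤ (2 / π * min θ (π - θ)) ^ c :=
        rpow_le_rpow_of_nonpos (by positivity) (mul_min_le_sin hθ.1.le hθ.2.le) hc₀.le
    _ = (2 / π) ^ c * min θ (π - θ) ^ c := mul_rpow (by positivity) hmin.le
    _ ≤ (2 / π) ^ c * (θ ^ c + (π - θ) ^ c) := by
        gcongr
        rcases min_choice θ (π - θ) with h | h <;> rw [h]
        · linarith [rpow_nonneg (by linarith [hθ.2] : 0 ≤ π - θ) c]
        · linarith [rpow_nonneg hθ.1.le c]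

theorem hasDerivAt_integral_mul_of_continuousOn {α : Type*} [TopologicalSpace α]
    [MeasurableSpace α] [OpensMeasurableSpace α] {μ : Measure α} {s K : Set α} {U : Set ℝ}
    (hs : MeasurableSet s) (hK : IsCompact K) (hsK : s ⊆ K) (hU : IsOpen U)
    {w : α → ℝ} (hw : IntegrableOn w s μ) {F F' : α → ℝ → ℝ}
    (hF : ContinuousOn (uncurry F) (K ×ˢ U)) (hF' : ContinuousOn (uncurry F') (K ×ˢ U))
    (hderiv : ∀ a ∈ K, ∀ u ∈ U, HasDerivAt (F a) (F' a u) u) {u₀ : ℝ} (hu₀ : u₀ ∈ U) :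
    HasDerivAt (fun u => ∫ a in s, w a * F a u ∂μ) (∫ a in s, w a * F' a u₀ ∂μ) u₀ := by
  have hint : ∀ G : α → ℝ → ℝ, ContinuousOn (uncurry G) (K ×ˢ U) → ∀ u ∈ U,
      IntegrableOn (fun a => w a * G a u) s μ := fun G hG u hu =>
    hw.mul_continuousOn_of_subset
      (hG.comp (continuous_id.prodMk continuous_const).continuousOn fun a ha => ⟨ha, hu⟩)
      hs hK hsK
  obtain ⟨δ, hδ, hball⟩ := Metric.isOpen_iff.1 hU u₀ hu₀
  have hsub : Metric.closedBall u₀ (δ / 2) ⊆ U :=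
    (Metric.closedBall_subset_ball (by linarith)).trans hball
  obtain ⟨C, hC⟩ := (hK.prod (isCompact_closedBall u₀ (δ / 2))).exists_bound_of_continuousOn
    (hF'.mono (prod_mono subset_rfl hsub))
  refine (hasDerivAt_integral_of_dominated_loc_of_deriv_le (μ := μ.restrict s)
    (F := fun u a => w a * F a u) (F' := fun u a => w a * F' a u)
    (bound := fun a => ‖w a‖ * C)
    (Metric.ball_mem_nhds u₀ (half_pos hδ)) ?_ (hint F hF u₀ hu₀)
    (hint F' hF' u₀ hu₀).aestronglyMeasurable ?_ (hw.norm.mul_const C) ?_).2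
  · filter_upwards [hU.mem_nhds hu₀] with u hu using (hint F hF u hu).aestronglyMeasurable
  · refine ae_restrict_of_forall_mem hs fun a ha u hu => ?_
    rw [norm_mul]
    exact mul_le_mul_of_nonneg_left (hC (a, u) ⟨hsK ha, Metric.ball_subset_closedBall hu⟩)
      (norm_nonneg _)
  · exact ae_restrict_of_forall_mem hs fun a ha u hu =>
      (hderiv a (hsK ha) u (hsub (Metric.ball_subset_closedBall hu))).const_mul (w a)

def polarDistSq (x y θ : ℝ) : ℝ := (x - y) ^ 2 + 2 * x * y * (1 - cos θ)

theorem polarDistSq_nonneg (x y θ : ℝ) : 0 ≤ polarDistSq x y θ := by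
  have h : polarDistSq x y θ = (x - y * cos θ) ^ 2 + (y * sin θ) ^ 2 := by
    unfold polarDistSq
    linear_combination (-(y ^ 2)) * sin_sq_add_cos_sq θ
  rw [h]
  positivity

theorem continuous_polarDistSq (x y : ℝ) : Continuous (polarDistSq x y) := by
  unfold polarDistSq
  fun_prop

def poissonTerm (lam : ℝ) (j k : ℕ) (D u : ℝ) : ℝ :=
  u ^ ((j : ℝ) + 1 - 2 * k) * (D + u ^ 2) ^ (-(lam + j - k + 1))

theorem poissonTerm_nonneg (lam : ℝ) (j k : ℕ) {D u : ℝ} (hD : 0 ≤ D) (hu : 0 ≤ u) :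
    0 ≤ poissonTerm lam j k D u :=
  mul_nonneg (rpow_nonneg hu _) (rpow_nonneg (by positivity) _)

theorem poissonTerm_le_rpow {lam : ℝ} {j k : ℕ} {D u : ℝ} (hb : 0 ≤ lam + j - k + 1)
    (hD : 0 ≤ D) (hu : 0 < u) :
    poissonTerm lam j k D u ≤ u ^ (-(2 * lam) - j - 1) := by
  calc poissonTerm lam j k D u ≤ u ^ ((j : ℝ) + 1 - 2 * k) * (u ^ 2) ^ (-(lam + j - k + 1)) :=
        mul_le_mul_of_nonneg_left (rpow_le_rpow_of_nonpos (by positivity) (by linarith)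
          (by linarith)) (rpow_nonneg hu.le _)
    _ = u ^ (-(2 * lam) - j - 1) := by
        rw [← rpow_natCast u 2, ← rpow_mul hu.le, ← rpow_add hu]
        push_cast
        ring_nf

theorem continuousOn_poissonTerm (lam : ℝ) (j k : ℕ) :
    ContinuousOn (fun p : ℝ × ℝ => poissonTerm lam j k p.1 p.2) (Ici 0 ×ˢ Ioi 0) := by
  refine ContinuousOn.mul ?_ ?_
  · exact continuous_snd.continuousOn.rpow_const fun p hp => Or.inl (ne_of_gt hp.2)
  · refine (Continuous.continuousOn (by fun_prop)).rpow_const fun p hp => Or.inl ?_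
    have : 0 ≤ p.1 := hp.1
    have : 0 < p.2 := hp.2
    positivity

theorem hasDerivAt_poissonTerm (lam : ℝ) (j k : ℕ) {D u : ℝ} (hD : 0 ≤ D) (hu : 0 < u) :
    HasDerivAt (poissonTerm lam j k D)
      ((j + 1 - 2 * k) * poissonTerm lam (j + 1) (k + 1) D u
        - 2 * (lam + j - k + 1) * poissonTerm lam (j + 1) k D u) u := by
  have hDu : 0 < D + u ^ 2 := by positivity
  have hpow : HasDerivAt (fun u : ℝ => u ^ ((j : ℝ) + 1 - 2 * k))
      (((j : ℝ) + 1 - 2 * k) * u ^ ((j : ℝ) + 1 - 2 * k - 1)) u :=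
    hasDerivAt_rpow_const (Or.inl hu.ne')
  have hbase : HasDerivAt (fun u : ℝ => D + u ^ 2) (2 * u) u := by
    simpa using (hasDerivAt_pow 2 u).const_add D
  refine (hpow.mul (hbase.rpow_const (p := -(lam + j - k + 1)) (Or.inl hDu.ne'))).congr_deriv ?_
  have he₁ : ((j + 1 : ℕ) : ℝ) + 1 - 2 * ((k + 1 : ℕ) : ℝ) = (j + 1 - 2 * k) - 1 := by
    push_cast; ring
  have he₂ : ((j + 1 : ℕ) : ℝ) + 1 - 2 * (k : ℝ) = ((j + 1 - 2 * k) - 1) + 2 := by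
    push_cast; ring
  have hq₁ : lam + ((j + 1 : ℕ) : ℝ) - ((k + 1 : ℕ) : ℝ) + 1 = lam + j - k + 1 := by
    push_cast; ring
  have hq₂ : -(lam + ((j + 1 : ℕ) : ℝ) - k + 1) = -(lam + j - k + 1) - 1 := by
    push_cast; ring
  have hsplit : u ^ ((j : ℝ) + 1 - 2 * k) = u ^ ((j : ℝ) + 1 - 2 * k - 1) * u := by
    rw [← rpow_add_one hu.ne']
    ring_nf
  simp only [poissonTerm]
  rw [he₁, he₂, hq₁, hq₂, rpow_add hu, hsplit, rpow_two]
  ring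

/-- `∂ᵤʲ [u (D + u²)^{-λ-1}] = ∑ₖ poissonCoeff lam j k * poissonTerm lam j k D u`:
the recursion is read off from `hasDerivAt_poissonTerm`. -/
def poissonCoeff (lam : ℝ) : ℕ → ℕ → ℝ
  | 0, 0 => 1
  | 0, _ + 1 => 0
  | j + 1, 0 => -2 * (lam + j + 1) * poissonCoeff lam j 0
  | j + 1, k + 1 =>
      -2 * (lam + j - k) * poissonCoeff lam j (k + 1) + (j + 1 - 2 * k) * poissonCoeff lam j k

theorem poissonCoeff_eq_zero (lam : ℝ) {j k : ℕ} (h : j + 1 < 2 * k) :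
    poissonCoeff lam j k = 0 := by
  induction j generalizing k with
  | zero =>
    obtain ⟨k, rfl⟩ := Nat.exists_eq_add_one.2 (by omega : 0 < k)
    rfl
  | succ j ih =>
    obtain ⟨k, rfl⟩ := Nat.exists_eq_add_one.2 (by omega : 0 < k)
    rcases Nat.lt_or_ge (j + 1) (2 * k) with hk | hk
    · simp [poissonCoeff, ih hk, ih (by omega : j + 1 < 2 * (k + 1))]
    · have hjk : (j : ℝ) + 1 - 2 * k = 0 := by
        have : (j : ℝ) + 1 = 2 * k := by exact_mod_cast (by omega : j + 1 = 2 * k)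
        linarith
      simp [poissonCoeff, hjk, ih (by omega : j + 1 < 2 * (k + 1))]

theorem continuousOn_poissonTerm_polarDistSq (lam x y : ℝ) (j k : ℕ) :
    ContinuousOn (uncurry fun θ u => poissonTerm lam j k (polarDistSq x y θ) u)
      (univ ×ˢ Ioi 0) :=
  (continuousOn_poissonTerm lam j k).comp
    (((continuous_polarDistSq x y).comp continuous_fst).prodMk continuous_snd).continuousOn
    fun p hp => ⟨polarDistSq_nonneg x y p.1, hp.2⟩

theorem integrableOn_sin_rpow_mul_poissonTerm {lam : ℝ} (hlam : 0 < lam) (x y : ℝ) (j k : ℕ)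
    {u : ℝ} (hu : 0 < u) :
    IntegrableOn (fun θ => sin θ ^ (2 * lam - 1) * poissonTerm lam j k (polarDistSq x y θ) u)
      (Ioo 0 π) :=
  (integrableOn_sin_rpow (by linarith)).mul_continuousOn_of_subset
    ((continuousOn_poissonTerm_polarDistSq lam x y j k).comp
      (continuous_id.prodMk continuous_const).continuousOn fun _ _ => ⟨mem_univ _, hu⟩)
    measurableSet_Ioo isCompact_Icc Ioo_subset_Icc_self

def termIntegral (lam x y : ℝ) (j k : ℕ) (u : ℝ) : ℝ :=
  ∫ θ in Ioo 0 π, sin θ ^ (2 * lam - 1) * poissonTerm lam j k (polarDistSq x y θ) u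

theorem hasDerivAt_termIntegral {lam : ℝ} (hlam : 0 < lam) (x y : ℝ) (j k : ℕ) {u : ℝ}
    (hu : 0 < u) :
    HasDerivAt (termIntegral lam x y j k)
      ((j + 1 - 2 * k) * termIntegral lam x y (j + 1) (k + 1) u
        - 2 * (lam + j - k + 1) * termIntegral lam x y (j + 1) k u) u := by
  have hcont := continuousOn_poissonTerm_polarDistSq lam x y
  have hF' : ContinuousOn (uncurry fun θ u =>
      ((j : ℝ) + 1 - 2 * k) * poissonTerm lam (j + 1) (k + 1) (polarDistSq x y θ) u
        - 2 * (lam + j - k + 1) * poissonTerm lam (j + 1) k (polarDistSq x y θ) u)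
      (univ ×ˢ Ioi 0) :=
    (continuousOn_const.mul (hcont (j + 1) (k + 1))).sub
      (continuousOn_const.mul (hcont (j + 1) k))
  have h := hasDerivAt_integral_mul_of_continuousOn measurableSet_Ioo isCompact_Icc
    Ioo_subset_Icc_self isOpen_Ioi (integrableOn_sin_rpow (c := 2 * lam - 1) (by linarith))
    ((hcont j k).mono (prod_mono (subset_univ _) subset_rfl))
    (hF'.mono (prod_mono (subset_univ _) subset_rfl))
    (fun θ _ u hu => hasDerivAt_poissonTerm lam j k (polarDistSq_nonneg x y θ) hu) hu
  refine h.congr_deriv ?_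
  have hint := fun j k => integrableOn_sin_rpow_mul_poissonTerm hlam x y j k hu
  rw [termIntegral, termIntegral, ← integral_const_mul, ← integral_const_mul,
    ← integral_sub ((hint _ _).const_mul _) ((hint _ _).const_mul _)]
  congr 1 with θ
  ring

theorem sum_poissonCoeff_succ (lam : ℝ) (j : ℕ) (I : ℕ → ℝ) :
    ∑ k ∈ Finset.range (j + 2), poissonCoeff lam j k *
      ((j + 1 - 2 * k) * I (k + 1) - 2 * (lam + j - k + 1) * I k)
    = ∑ k ∈ Finset.range (j + 3), poissonCoeff lam (j + 1) k * I k := by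
  have hshift :
      ∑ k ∈ Finset.range (j + 2), poissonCoeff lam j k * (2 * (lam + j - k + 1) * I k)
      = ∑ k ∈ Finset.range (j + 2), 2 * (lam + j - k) * poissonCoeff lam j (k + 1) * I (k + 1)
        + 2 * (lam + j + 1) * poissonCoeff lam j 0 * I 0 := by
    rw [Finset.sum_range_succ' _ (j + 1), Finset.sum_range_succ _ (j + 1),
      poissonCoeff_eq_zero lam (by omega : j + 1 < 2 * (j + 1 + 1))]
    simp only [Nat.cast_add, Nat.cast_one, Nat.cast_zero, mul_zero, zero_mul, add_zero]
    congr 1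
    · exact Finset.sum_congr rfl fun k _ => by ring
    · ring
  have hsucc : ∀ k : ℕ, poissonCoeff lam (j + 1) (k + 1) * I (k + 1)
      = poissonCoeff lam j k * ((j + 1 - 2 * k) * I (k + 1))
        - 2 * (lam + j - k) * poissonCoeff lam j (k + 1) * I (k + 1) := by
    intro k
    simp only [poissonCoeff]
    ring
  rw [Finset.sum_range_succ' _ (j + 2), Finset.sum_congr rfl fun k _ => hsucc k]
  simp only [mul_sub, Finset.sum_sub_distrib, hshift, poissonCoeff]
  ring

def kernelDeriv (lam x y : ℝ) (j : ℕ) (u : ℝ) : ℝ :=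
  ∑ k ∈ Finset.range (j + 2), poissonCoeff lam j k * termIntegral lam x y j k u

theorem hasDerivAt_kernelDeriv {lam : ℝ} (hlam : 0 < lam) (x y : ℝ) (j : ℕ) {u : ℝ}
    (hu : 0 < u) :
    HasDerivAt (kernelDeriv lam x y j) (kernelDeriv lam x y (j + 1) u) u := by
  have h := HasDerivAt.fun_sum (u := Finset.range (j + 2)) fun k _ =>
    (hasDerivAt_termIntegral hlam x y j k hu).const_mul (poissonCoeff lam j k)
  rwa [sum_poissonCoeff_succ lam j fun k => termIntegral lam x y (j + 1) k u] at h

theorem besselPoissonKernel_eq_kernelDeriv_zero (lam u x y : ℝ) :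
    besselPoissonKernel lam u x y = 2 * lam * (x * y) ^ lam / π * kernelDeriv lam x y 0 u := by
  simp only [kernelDeriv, termIntegral, Finset.sum_range_succ, Finset.sum_range_zero,
    poissonCoeff, zero_add, one_mul, zero_mul, add_zero, besselPoissonKernel]
  rw [mul_assoc, ← integral_const_mul, ← integral_const_mul]
  refine setIntegral_congr_fun measurableSet_Ioo fun θ _ => ?_
  have hD : 0 ≤ (x - y) ^ 2 + 2 * x * y * (1 - cos θ) + u ^ 2 := by
    positivity [polarDistSq_nonneg x y θ]
  simp only [poissonTerm, polarDistSq, CharP.cast_eq_zero]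
  rw [show (0 : ℝ) + 1 - 2 * 0 = 1 by norm_num, rpow_one,
    show -(lam + 0 - 0 + 1) = -(lam + 1) by ring, rpow_neg hD, add_right_comm]
  ring

theorem iteratedDeriv_besselPoissonKernel {lam : ℝ} (hlam : 0 < lam) (x y : ℝ) (j : ℕ)
    {u : ℝ} (hu : 0 < u) :
    iteratedDeriv j (fun v => (besselPoissonKernel lam v x y : ℂ)) u
      = ((2 * lam * (x * y) ^ lam / π * kernelDeriv lam x y j u : ℝ) : ℂ) := by
  induction j generalizing u with
  | zero => rw [iteratedDeriv_zero, besselPoissonKernel_eq_kernelDeriv_zero]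
  | succ j ih =>
    have heq : iteratedDeriv j (fun v => (besselPoissonKernel lam v x y : ℂ))
        =ᶠ[𝓝 u] fun v =>
          ((2 * lam * (x * y) ^ lam / π * kernelDeriv lam x y j v : ℝ) : ℂ) := by
      filter_upwards [isOpen_Ioi.mem_nhds hu] with v hv using ih hv
    rw [iteratedDeriv_succ, heq.deriv_eq]
    exact ((hasDerivAt_kernelDeriv hlam x y j hu).const_mul _).ofReal_comp.deriv

theorem kernelDeriv_eq_sum_range_half (lam x y : ℝ) (j : ℕ) (u : ℝ) :
    kernelDeriv lam x y j u
      = ∑ k ∈ Finset.range ((j + 1) / 2 + 1),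
          poissonCoeff lam j k * termIntegral lam x y j k u :=
  (Finset.sum_subset (Finset.range_subset_range.2 (by omega)) fun k _ hk => by
    rw [poissonCoeff_eq_zero lam (by simp at hk; omega), zero_mul]).symm

theorem integrableOn_Ioi_add_rpow_mul_rpow {t r p : ℝ} (ht : 0 < t) (hr : r ≤ 0) (hp : -1 < p)
    (hrp : r + p < -1) : IntegrableOn (fun s => (t + s) ^ r * s ^ p) (Ioi 0) := by
  have hmeas : ∀ s ⊆ Ioi (0 : ℝ), MeasurableSet s →
      AEStronglyMeasurable (fun s => (t + s) ^ r * s ^ p) (volume.restrict s) := fun s hs hms =>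
    ((ContinuousOn.mul ((continuous_const_add t).continuousOn.rpow_const fun z hz =>
        Or.inl (by linarith [mem_Ioi.mp (hs hz)] : 0 < t + z).ne')
      (continuous_id.continuousOn.rpow_const fun z hz =>
      Or.inl (ne_of_gt (hs hz))))).aestronglyMeasurable hms
  have hnear : IntegrableOn (fun s => (t + s) ^ r * s ^ p) (Ioc 0 1) := by
    refine Integrable.mono'
      (((intervalIntegral.intervalIntegrable_rpow' hp).1).const_mul (t ^ r))
      (hmeas _ Ioc_subset_Ioi_self measurableSet_Ioc)
      (ae_restrict_of_forall_mem measurableSet_Ioc fun s hs => ?_)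
    rw [norm_of_nonneg (by have := hs.1; positivity)]
    exact mul_le_mul_of_nonneg_right (rpow_le_rpow_of_nonpos ht (by linarith [hs.1]) hr)
      (rpow_nonneg hs.1.le _)
  have hfar : IntegrableOn (fun s => (t + s) ^ r * s ^ p) (Ioi 1) := by
    refine Integrable.mono' (integrableOn_Ioi_rpow_of_lt hrp one_pos)
      (hmeas _ (Ioi_subset_Ioi zero_le_one) measurableSet_Ioi)
      (ae_restrict_of_forall_mem measurableSet_Ioi fun s (hs : 1 < s) => ?_)
    rw [norm_of_nonneg (by positivity), rpow_add (by linarith)]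
    exact mul_le_mul_of_nonneg_right (rpow_le_rpow_of_nonpos (by linarith) (by linarith) hr)
      (rpow_nonneg (by linarith) _)
  simpa only [Ioc_union_Ioi_eq_Ioi zero_le_one] using hnear.union hfar

theorem integrable_sin_rpow_mul_poissonTerm_mul_rpow {lam : ℝ} (hlam : 0 < lam) (x y : ℝ)
    {j k : ℕ} (hk : k ≤ j + 1) {p : ℝ} (hp : -1 < p) (hp' : p < 2 * lam + j) {t : ℝ}
    (ht : 0 < t) :
    Integrable (fun z : ℝ × ℝ =>
        sin z.1 ^ (2 * lam - 1) * poissonTerm lam j k (polarDistSq x y z.1) (t + z.2) * z.2 ^ p)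
      ((volume.restrict (Ioo 0 π)).prod (volume.restrict (Ioi 0))) := by
  have hk' : (k : ℝ) ≤ j + 1 := by exact_mod_cast hk
  refine Integrable.mono'
    (Integrable.mul_prod (integrableOn_sin_rpow (c := 2 * lam - 1) (by linarith))
      (integrableOn_Ioi_add_rpow_mul_rpow ht (r := -(2 * lam) - j - 1) (by linarith) hp
        (by linarith))) ?_ ?_
  · rw [Measure.prod_restrict]
    refine ContinuousOn.aestronglyMeasurable ?_ (measurableSet_Ioo.prod measurableSet_Ioi)
    refine ContinuousOn.mul (ContinuousOn.mul ?_ ?_) ?_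
    · exact (continuous_sin.comp continuous_fst).continuousOn.rpow_const fun z hz =>
        Or.inl (sin_pos_of_pos_of_lt_pi hz.1.1 hz.1.2).ne'
    · exact (continuousOn_poissonTerm lam j k).comp
        (((continuous_polarDistSq x y).comp continuous_fst).prodMk
          (continuous_const.add continuous_snd)).continuousOn
        fun z hz => ⟨polarDistSq_nonneg x y z.1, (by linarith [mem_Ioi.mp hz.2] : 0 < t + z.2)⟩
    · exact continuous_snd.continuousOn.rpow_const fun z hz => Or.inl (ne_of_gt hz.2)
  · rw [Measure.prod_restrict]
    refine ae_restrict_of_forall_mem (measurableSet_Ioo.prod measurableSet_Ioi) ?_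
    rintro ⟨θ, s⟩ ⟨hθ, hs : 0 < s⟩
    have hsin := rpow_nonneg (sin_pos_of_pos_of_lt_pi hθ.1 hθ.2).le (2 * lam - 1)
    have hD := polarDistSq_nonneg x y θ
    rw [norm_of_nonneg (mul_nonneg (mul_nonneg hsin (poissonTerm_nonneg lam j k hD
      (by linarith))) (rpow_nonneg hs.le _)), mul_assoc]
    exact mul_le_mul_of_nonneg_left (mul_le_mul_of_nonneg_right
      (poissonTerm_le_rpow (lam := lam) (j := j) (k := k) (by linarith) hD
        (by linarith : 0 < t + s)) (rpow_nonneg hs.le _)) hsin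

theorem integral_poissonTerm_add_mul_rpow (lam β : ℝ) (m k : ℕ) {t D : ℝ} (ht : 0 < t)
    (hD : 0 ≤ D) :
    ∫ s in Ioi 0, poissonTerm lam m k D (t + s) * s ^ ((m : ℝ) - β - 1)
      = t ^ (-(2 * lam) - 1 - β) * phiLam lam β m k (√D / t) := by
  set g : ℝ → ℝ := fun s => poissonTerm lam m k D (t + s) * s ^ ((m : ℝ) - β - 1)
  have hscale : ∀ v ∈ Ioi (0 : ℝ), g (t * v) = t ^ (-(2 * lam) - 2 - β) *
      ((1 + v) ^ ((m : ℝ) + 1 - 2 * k) * v ^ ((m : ℝ) - β - 1) /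
        ((1 + v) ^ 2 + (√D / t) ^ 2) ^ (lam + m - k + 1)) := by
    intro v (hv : 0 < v)
    have hbase : D + (t + t * v) ^ 2 = t ^ (2 : ℝ) * ((1 + v) ^ 2 + (√D / t) ^ 2) := by
      rw [div_pow, sq_sqrt hD, rpow_two]
      field_simp
      ring
    simp only [g, poissonTerm]
    rw [hbase, show t + t * v = t * (1 + v) by ring, mul_rpow ht.le (by positivity),
      mul_rpow (by positivity) (by positivity), mul_rpow ht.le hv.le, ← rpow_mul ht.le,
      rpow_neg (by positivity) (_ + 1), div_eq_mul_inv]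
    have ht' : t ^ (-(2 * lam) - 2 - β) = t ^ ((m : ℝ) + 1 - 2 * k) *
        t ^ (2 * -(lam + m - k + 1)) * t ^ ((m : ℝ) - β - 1) := by
      rw [← rpow_add ht, ← rpow_add ht]
      ring_nf
    rw [ht']
    ring
  have hsub := integral_comp_mul_left_Ioi g 0 ht
  rw [mul_zero, smul_eq_mul, setIntegral_congr_fun measurableSet_Ioi hscale,
    integral_const_mul, eq_inv_mul_iff_mul_eq₀ ht.ne'] at hsub
  rw [phiLam, ← hsub, ← mul_assoc, show -(2 * lam) - 1 - β = 1 + (-(2 * lam) - 2 - β) by ring,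
    rpow_add ht, rpow_one]

section FractionalDerivative

variable {lam β : ℝ} (x y : ℝ) {m : ℕ} {t : ℝ}

theorem integrable_termIntegral_add_mul_rpow (hlam : 0 < lam) (hβ : β < m)
    (hβ' : -(2 * lam) - 1 < β) (ht : 0 < t) {k : ℕ} (hk : k ≤ m + 1) :
    IntegrableOn (fun s => termIntegral lam x y m k (t + s) * s ^ ((m : ℝ) - β - 1)) (Ioi 0) :=
  ((integrable_sin_rpow_mul_poissonTerm_mul_rpow hlam x y hk (p := (m : ℝ) - β - 1)
    (by linarith) (by linarith) ht).integral_prod_right).congr (Eventually.of_forall fun s => by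
      dsimp only [termIntegral]; exact integral_mul_const _ _)

theorem integral_termIntegral_add_mul_rpow (hlam : 0 < lam) (hβ : β < m)
    (hβ' : -(2 * lam) - 1 < β) (ht : 0 < t) {k : ℕ} (hk : k ≤ m + 1) :
    ∫ s in Ioi 0, termIntegral lam x y m k (t + s) * s ^ ((m : ℝ) - β - 1)
      = t ^ (-(2 * lam) - 1 - β) * ∫ θ in Ioo 0 π,
          sin θ ^ (2 * lam - 1) * phiLam lam β m k (√(polarDistSq x y θ) / t) := by
  have hswap := integral_integral_swap (f := fun θ s => sin θ ^ (2 * lam - 1) *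
      poissonTerm lam m k (polarDistSq x y θ) (t + s) * s ^ ((m : ℝ) - β - 1))
    (integrable_sin_rpow_mul_poissonTerm_mul_rpow hlam x y hk (by linarith) (by linarith) ht)
  simp only [termIntegral, ← integral_mul_const] at hswap ⊢
  rw [← hswap, ← integral_const_mul]
  refine setIntegral_congr_fun measurableSet_Ioo fun θ _ => ?_
  simp only [mul_assoc, integral_const_mul]
  rw [integral_poissonTerm_add_mul_rpow lam β m k ht (polarDistSq_nonneg x y θ)]
  ring

theorem integral_kernelDeriv_add_mul_rpow (hlam : 0 < lam) (hβ : β < m)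
    (hβ' : -(2 * lam) - 1 < β) (ht : 0 < t) :
    ∫ s in Ioi 0, kernelDeriv lam x y m (t + s) * s ^ ((m : ℝ) - β - 1)
      = ∑ k ∈ Finset.range ((m + 1) / 2 + 1), poissonCoeff lam m k *
          (t ^ (-(2 * lam) - 1 - β) * ∫ θ in Ioo 0 π,
            sin θ ^ (2 * lam - 1) * phiLam lam β m k (√(polarDistSq x y θ) / t)) := by
  have hk : ∀ k ∈ Finset.range ((m + 1) / 2 + 1), k ≤ m + 1 := fun k hk => by
    simp only [Finset.mem_range] at hk; omega
  simp only [kernelDeriv_eq_sum_range_half, Finset.sum_mul, mul_assoc]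
  rw [integral_finsetSum _ fun k hk' =>
    (integrable_termIntegral_add_mul_rpow x y hlam hβ hβ' ht (hk k hk')).const_mul _]
  refine Finset.sum_congr rfl fun k hk' => ?_
  rw [integral_const_mul, integral_termIntegral_add_mul_rpow x y hlam hβ hβ' ht (hk k hk')]

end FractionalDerivative

end BesselPoisson

open BesselPoisson in
theorem statement3_general (lam β : ℝ) (hlam : 0 < lam) (hβ : 0 < β)
    (m : ℕ) (hm2 : β < m) :
    ∃ b : ℕ → ℂ, ∀ t x y : ℝ, 0 < t → 0 < x → 0 < y →
      ((t ^ β : ℝ) : ℂ) *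
          fracDeriv β m (fun u => ((besselPoissonKernel lam u x y : ℝ) : ℂ)) t =
        ∑ k ∈ Finset.range ((m + 1) / 2 + 1),
          b k * ((t ^ (-(2 * lam) - 1) * (x * y) ^ lam : ℝ) : ℂ) *
            (((∫ θ in Set.Ioo 0 π, Real.sin θ ^ (2 * lam - 1) *
                phiLam lam β m k
                  (Real.sqrt ((x - y) ^ 2 + 2 * x * y * (1 - Real.cos θ)) / t)) : ℝ) : ℂ) := by
  refine ⟨fun k => Complex.exp (-(π : ℂ) * Complex.I * ((m : ℂ) - (β : ℂ))) /
      ((Real.Gamma ((m : ℝ) - β) : ℝ) : ℂ) * ((2 * lam / π * poissonCoeff lam m k : ℝ) : ℂ),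
    fun t x y ht _ _ => ?_⟩
  have hintegral :
      ∫ s in Ioi 0, iteratedDeriv m (fun u => (besselPoissonKernel lam u x y : ℂ)) (t + s)
        * ((s ^ ((m : ℝ) - β - 1) : ℝ) : ℂ)
      = ((2 * lam * (x * y) ^ lam / π * ∫ s in Ioi 0,
          kernelDeriv lam x y m (t + s) * s ^ ((m : ℝ) - β - 1) : ℝ) : ℂ) := by
    rw [← integral_const_mul, ← integral_complex_ofReal]
    refine setIntegral_congr_fun measurableSet_Ioi fun s (hs : 0 < s) => ?_
    rw [iteratedDeriv_besselPoissonKernel hlam x y m (by linarith)]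
    push_cast
    ring
  have htpow : t ^ β * t ^ (-(2 * lam) - 1 - β) = t ^ (-(2 * lam) - 1) := by
    rw [← rpow_add ht]
    ring_nf
  rw [fracDeriv, hintegral, integral_kernelDeriv_add_mul_rpow x y hlam hm2 (by linarith) ht,
    Finset.mul_sum, Complex.ofReal_sum, Finset.mul_sum, Finset.mul_sum]
  refine Finset.sum_congr rfl fun k _ => ?_
  dsimp only [polarDistSq]
  rw [← htpow]
  push_cast
  ring

/-- identity (3.2) of the paper: there are complex constants `b_k^λ`,
`0 ≤ k ≤ (m+1)/2`, such that
`t^β ∂_t^β P_t^λ(x,y) = Σ_k b_k^λ t^{-2λ-1} (xy)^λ ∫_0^π (sin θ)^{2λ-1} φ^{λ,k}(√((x-y)²+2xy(1-cos θ))/t) dθ`. -/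
theorem statement3 (lam β : ℝ) (hlam : 0 < lam) (hβ : 0 < β)
    (m : ℕ) (hm : 0 < m) (hm1 : (m : ℝ) - 1 ≤ β) (hm2 : β < m) :
    ∃ b : ℕ → ℂ, ∀ t x y : ℝ, 0 < t → 0 < x → 0 < y →
      ((t ^ β : ℝ) : ℂ) *
          fracDeriv β m (fun u => ((besselPoissonKernel lam u x y : ℝ) : ℂ)) t =
        ∑ k ∈ Finset.range ((m + 1) / 2 + 1),
          b k * ((t ^ (-(2 * lam) - 1) * (x * y) ^ lam : ℝ) : ℂ) *
            (((∫ θ in Set.Ioo 0 π, Real.sin θ ^ (2 * lam - 1) *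
                phiLam lam β m k
                  (Real.sqrt ((x - y) ^ 2 + 2 * x * y * (1 - Real.cos θ)) / t)) : ℝ) : ℂ) :=
  statement3_general lam β hlam hβ m hm2
end
end

section
/- Let λ>0. There exists C>0 such that for all x,y>0 with y < x/2 or y > 2x: ( ∫_0^∞ | t D_{λ,x}* P_t^{λ+1}(x,y) |² dt/t )^{1/2} ≤ C / max(x,y). -/
open MeasureTheory Real Set

noncomputable section

/-- The differential operator `D_λ* = -x^{-λ} (d/dx) x^λ`. -/
def DlamStar (lam : ℝ) (g : ℝ → ℂ) (x : ℝ) : ℂ :=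
  -(((x ^ (-lam) : ℝ)) : ℂ) * deriv (fun u => ((u ^ lam : ℝ) : ℂ) * g u) x

/-!
Write `P_t^{λ+1}(u,y) = c (uy)^{λ+1} t I(u)` with the angular integral
`I(u) = ∫_0^π sin^{2λ+1} θ D(u,θ)^{-(λ+2)} dθ`, where
`D(u,θ) = (u-y)² + t² + 2uy(1 - cos θ) ≥ (u-y)² + t²`.
Then `x^λ P_t^{λ+1}(x,y) = c t y^{λ+1} x^{2λ+1} I(x)`, and differentiating under the integral sign
gives `|t D_λ* P_t^{λ+1}(x,y)| ≲ t² x^λ y^{λ+1} Q^{-(λ+2)} (1 + x(x+y)/Q)` with `Q = (x-y)² + t²`.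
Off the diagonal `Q ≥ (M² + t²)/4` for `M = max(x,y)`, so the right side is `≲ M⁻¹ φ(t/M)` with
`φ(s) = s²(1+s²)^{-(λ+2)}`, and the substitution `t = Ms` bounds the square function by
`M⁻² ∫_0^∞ φ(s)² ds/s`, which is finite.
-/

def poissonDenom (y t θ u : ℝ) : ℝ := (u - y) ^ 2 + t ^ 2 + 2 * u * y * (1 - cos θ)

def poissonAngularIntegral (q p y t u : ℝ) : ℝ :=
  ∫ θ in Ioo 0 π, sin θ ^ q / poissonDenom y t θ u ^ p

theorem besselPoissonKernel_eq (lam t x y : ℝ) :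
    besselPoissonKernel lam t x y =
      2 * lam * (x * y) ^ lam * t / π * poissonAngularIntegral (2 * lam - 1) (lam + 1) y t x :=
  rfl

section PoissonDenom

variable {y t θ u : ℝ}

theorem sq_le_poissonDenom : t ^ 2 ≤ poissonDenom y t θ u := by
  have h : poissonDenom y t θ u = (u - y * cos θ) ^ 2 + (y * sin θ) ^ 2 + t ^ 2 := by
    unfold poissonDenom
    linear_combination (-y ^ 2) * sin_sq_add_cos_sq θ
  rw [h]
  linarith [sq_nonneg (u - y * cos θ), sq_nonneg (y * sin θ)]

theorem sub_sq_add_sq_le_poissonDenom (hu : 0 ≤ u) (hy : 0 ≤ y) :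
    (u - y) ^ 2 + t ^ 2 ≤ poissonDenom y t θ u := by
  unfold poissonDenom
  nlinarith [mul_nonneg (mul_nonneg hu hy) (sub_nonneg.2 (cos_le_one θ))]

theorem hasDerivAt_poissonDenom (y t θ u : ℝ) :
    HasDerivAt (poissonDenom y t θ) (2 * (u - y * cos θ)) u := by
  refine ((((hasDerivAt_id' u).sub_const y).fun_pow 2).add_const (t ^ 2) |>.fun_add
    ((((hasDerivAt_id' u).const_mul 2).mul_const y).mul_const (1 - cos θ))).congr_deriv ?_
  norm_num
  ring

end PoissonDenom

theorem abs_sin_rpow_mul_rpow_le {θ q r D E : ℝ} (hθ : θ ∈ Icc 0 π) (hq : 0 ≤ q) (hE : 0 < E)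
    (hED : E ≤ D) (hr : r ≤ 0) : |sin θ ^ q * D ^ r| ≤ E ^ r := by
  have hsin : 0 ≤ sin θ := sin_nonneg_of_nonneg_of_le_pi hθ.1 hθ.2
  rw [abs_mul, abs_of_nonneg (rpow_nonneg hsin q),
    abs_of_nonneg (rpow_nonneg (hE.le.trans hED) r)]
  calc sin θ ^ q * D ^ r ≤ 1 * E ^ r :=
        mul_le_mul (rpow_le_one hsin (sin_le_one θ) hq) (rpow_le_rpow_of_nonpos hE hED hr)
          (rpow_nonneg (hE.le.trans hED) r) zero_le_one
    _ = E ^ r := one_mul _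

theorem abs_setIntegral_Ioo_pi_le {f : ℝ → ℝ} {C : ℝ} (h : ∀ θ ∈ Ioo 0 π, |f θ| ≤ C) :
    |∫ θ in Ioo 0 π, f θ| ≤ π * C := by
  have := norm_setIntegral_le_of_norm_le_const (μ := volume) (f := f) measure_Ioo_lt_top h
  rwa [volume_real_Ioo_of_le pi_pos.le, sub_zero, mul_comm] at this

section PoissonAngularIntegral

variable {q p y t θ : ℝ}

theorem div_poissonDenom_rpow_eq (ht : t ≠ 0) (u : ℝ) :
    sin θ ^ q / poissonDenom y t θ u ^ p = sin θ ^ q * poissonDenom y t θ u ^ (-p) := by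
  rw [rpow_neg ((sq_pos_of_ne_zero ht).le.trans sq_le_poissonDenom), div_eq_mul_inv]

theorem continuous_sin_rpow_mul_poissonDenom_rpow (hq : 0 ≤ q) (ht : t ≠ 0) (u r : ℝ) :
    Continuous fun θ => sin θ ^ q * poissonDenom y t θ u ^ r :=
  (continuous_sin.rpow_const fun _ => Or.inr hq).mul <|
    (by unfold poissonDenom; fun_prop : Continuous fun θ => poissonDenom y t θ u).rpow_const
      fun _ => Or.inl ((sq_pos_of_ne_zero ht).trans_le sq_le_poissonDenom).ne'

def poissonAngularIntegrandDeriv (q p y t u θ : ℝ) : ℝ :=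
  -p * (2 * (u - y * cos θ)) * (sin θ ^ q * poissonDenom y t θ u ^ (-p - 1))

theorem hasDerivAt_sin_rpow_div_poissonDenom_rpow (ht : t ≠ 0) (u : ℝ) :
    HasDerivAt (fun u => sin θ ^ q / poissonDenom y t θ u ^ p)
      (poissonAngularIntegrandDeriv q p y t u θ) u := by
  have hD := (sq_pos_of_ne_zero ht).trans_le (sq_le_poissonDenom (y := y) (θ := θ) (u := u))
  simp only [div_poissonDenom_rpow_eq ht]
  refine (((hasDerivAt_poissonDenom y t θ u).rpow_const (Or.inl hD.ne')).const_mul _).congr_deriv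
    ?_
  rw [poissonAngularIntegrandDeriv]
  ring

theorem abs_poissonAngularIntegrandDeriv_le (hq : 0 ≤ q) (hp : 0 ≤ p) (hy : 0 ≤ y)
    (hθ : θ ∈ Icc 0 π) {u E : ℝ} (hE : 0 < E) (hED : E ≤ poissonDenom y t θ u) :
    |poissonAngularIntegrandDeriv q p y t u θ| ≤ 2 * p * (|u| + y) * E ^ (-p - 1) := by
  have hcos : |u - y * cos θ| ≤ |u| + y := by
    refine (abs_sub _ _).trans (add_le_add_right ?_ _)
    rw [abs_mul, abs_of_nonneg hy]
    exact mul_le_of_le_one_right hy (abs_cos_le_one θ)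
  have hsin := abs_sin_rpow_mul_rpow_le hθ hq hE hED (by linarith : -p - 1 ≤ 0)
  rw [poissonAngularIntegrandDeriv, abs_mul, abs_mul, abs_mul, abs_neg, abs_of_nonneg hp,
    abs_two]
  calc p * (2 * |u - y * cos θ|) * |sin θ ^ q * poissonDenom y t θ u ^ (-p - 1)|
      ≤ p * (2 * (|u| + y)) * E ^ (-p - 1) := by gcongr
    _ = 2 * p * (|u| + y) * E ^ (-p - 1) := by ring

theorem abs_poissonAngularIntegral_le (hq : 0 ≤ q) (hp : 0 ≤ p) (ht : 0 < t) {x : ℝ}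
    (hx : 0 ≤ x) (hy : 0 ≤ y) :
    |poissonAngularIntegral q p y t x| ≤ π * ((x - y) ^ 2 + t ^ 2) ^ (-p) := by
  refine abs_setIntegral_Ioo_pi_le fun θ hθ => ?_
  rw [div_poissonDenom_rpow_eq ht.ne']
  exact abs_sin_rpow_mul_rpow_le (Ioo_subset_Icc_self hθ) hq (by positivity)
    (sub_sq_add_sq_le_poissonDenom hx hy) (neg_nonpos.2 hp)

theorem exists_hasDerivAt_poissonAngularIntegral (hq : 0 ≤ q) (hp : 0 ≤ p) (ht : 0 < t)
    {x : ℝ} (hx : 0 ≤ x) (hy : 0 ≤ y) :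
    ∃ d, HasDerivAt (poissonAngularIntegral q p y t) d x ∧
      |d| ≤ π * (2 * p * (x + y) * ((x - y) ^ 2 + t ^ 2) ^ (-p - 1)) := by
  have hmeas : ∀ u, AEStronglyMeasurable (fun θ => sin θ ^ q / poissonDenom y t θ u ^ p)
      (volume.restrict (Ioo 0 π)) := fun u => by
    simp only [div_poissonDenom_rpow_eq ht.ne']
    exact (continuous_sin_rpow_mul_poissonDenom_rpow hq ht.ne' u _).aestronglyMeasurable
  have hint : IntegrableOn (fun θ => sin θ ^ q / poissonDenom y t θ x ^ p) (Ioo 0 π) := by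
    refine (integrableOn_const (C := (t ^ 2) ^ (-p)) measure_Ioo_lt_top.ne).mono' (hmeas x) ?_
    filter_upwards [ae_restrict_mem measurableSet_Ioo] with θ hθ
    rw [div_poissonDenom_rpow_eq ht.ne']
    exact abs_sin_rpow_mul_rpow_le (Ioo_subset_Icc_self hθ) hq (by positivity)
      sq_le_poissonDenom (neg_nonpos.2 hp)
  have hderiv_meas : AEStronglyMeasurable (poissonAngularIntegrandDeriv q p y t x)
      (volume.restrict (Ioo 0 π)) :=
    ((by fun_prop : Continuous fun θ => -p * (2 * (x - y * cos θ))).mul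
      (continuous_sin_rpow_mul_poissonDenom_rpow hq ht.ne' x _)).aestronglyMeasurable
  have hbound : ∀ᵐ θ ∂volume.restrict (Ioo 0 π), ∀ u ∈ Metric.ball x 1,
      ‖poissonAngularIntegrandDeriv q p y t u θ‖ ≤
        2 * p * (|x| + 1 + y) * (t ^ 2) ^ (-p - 1) := by
    filter_upwards [ae_restrict_mem measurableSet_Ioo] with θ hθ u hu
    have hu : |u| ≤ |x| + 1 := by
      have := abs_sub_abs_le_abs_sub u x
      rw [Metric.mem_ball, Real.dist_eq] at hu
      linarith
    refine (abs_poissonAngularIntegrandDeriv_le hq hp hy (Ioo_subset_Icc_self hθ)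
      (by positivity) sq_le_poissonDenom).trans ?_
    gcongr
  obtain ⟨-, hderiv⟩ := hasDerivAt_integral_of_dominated_loc_of_deriv_le
    (Metric.ball_mem_nhds x one_pos) (Filter.Eventually.of_forall hmeas) hint hderiv_meas hbound
    (integrableOn_const measure_Ioo_lt_top.ne)
    (ae_of_all _ fun θ u _ => hasDerivAt_sin_rpow_div_poissonDenom_rpow ht.ne' u)
  refine ⟨_, hderiv, abs_setIntegral_Ioo_pi_le fun θ hθ => ?_⟩
  simpa only [abs_of_nonneg hx] using abs_poissonAngularIntegrandDeriv_le hq hp hy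
    (Ioo_subset_Icc_self hθ) (by positivity) (sub_sq_add_sq_le_poissonDenom hx hy)

end PoissonAngularIntegral

theorem norm_DlamStar_ofReal {lam x d : ℝ} {g : ℝ → ℝ}
    (h : HasDerivAt (fun u => u ^ lam * g u) d x) :
    ‖DlamStar lam (fun u => (g u : ℂ)) x‖ = |x ^ (-lam)| * |d| := by
  have hderiv : deriv (fun u => ((u ^ lam : ℝ) : ℂ) * (g u : ℂ)) x = d := by
    simpa only [Complex.ofReal_mul] using h.ofReal_comp.deriv
  rw [DlamStar, hderiv, norm_mul, norm_neg, Complex.norm_real, Complex.norm_real,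
    Real.norm_eq_abs, Real.norm_eq_abs]

theorem rpow_mul_besselPoissonKernel_add_one (lam t : ℝ) {u y : ℝ} (hu : 0 < u) (hy : 0 ≤ y) :
    u ^ lam * besselPoissonKernel (lam + 1) t u y =
      2 * (lam + 1) * t * y ^ (lam + 1) / π *
        (u ^ (2 * lam + 1) * poissonAngularIntegral (2 * (lam + 1) - 1) (lam + 1 + 1) y t u) := by
  rw [besselPoissonKernel_eq, mul_rpow hu.le hy, show 2 * lam + 1 = lam + (lam + 1) by ring,
    rpow_add hu lam (lam + 1)]
  ring

theorem norm_mul_DlamStar_besselPoissonKernel_le {lam x y t : ℝ} (hlam : -1 / 2 ≤ lam)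
    (hx : 0 < x) (hy : 0 < y) (ht : 0 < t) :
    ‖(t : ℂ) * DlamStar lam (fun u => ((besselPoissonKernel (lam + 1) t u y : ℝ) : ℂ)) x‖ ≤
      2 * (lam + 1) * t ^ 2 * x ^ lam * y ^ (lam + 1) *
        ((2 * lam + 1) * ((x - y) ^ 2 + t ^ 2) ^ (-(lam + 1 + 1)) +
          2 * (lam + 1 + 1) * x * (x + y) * ((x - y) ^ 2 + t ^ 2) ^ (-(lam + 1 + 1) - 1)) := by
  set I := poissonAngularIntegral (2 * (lam + 1) - 1) (lam + 1 + 1) y t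
  have hq : 0 ≤ 2 * (lam + 1) - 1 := by linarith
  have hp : 0 ≤ lam + 1 + 1 := by linarith
  obtain ⟨d, hd, hd_le⟩ := exists_hasDerivAt_poissonAngularIntegral hq hp ht hx.le hy.le
  have hI_le := abs_poissonAngularIntegral_le hq hp ht hx.le hy.le
  set k := 2 * (lam + 1) * t * y ^ (lam + 1) / π
  have hderiv : HasDerivAt (fun u => u ^ lam * besselPoissonKernel (lam + 1) t u y)
      (k * ((2 * lam + 1) * x ^ (2 * lam) * I x + x ^ (2 * lam + 1) * d)) x := by
    refine ((((hasDerivAt_rpow_const (p := 2 * lam + 1) (Or.inl hx.ne')).mul hd).const_mul k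
      ).congr_deriv ?_).congr_of_eventuallyEq ?_
    · rw [show 2 * lam + 1 - 1 = 2 * lam by ring]
    · filter_upwards [lt_mem_nhds hx] with u hu
      exact rpow_mul_besselPoissonKernel_add_one lam t hu hy.le
  set a := x ^ lam
  have ha : 0 < a := rpow_pos_of_pos hx lam
  have hk : 0 ≤ k :=
    div_nonneg (mul_nonneg (mul_nonneg (by linarith) ht.le) (rpow_nonneg hy.le _)) pi_pos.le
  have hpow : x ^ (2 * lam) = a * a ∧ x ^ (2 * lam + 1) = a * a * x := by
    rw [two_mul, rpow_add hx, rpow_add_one hx.ne', rpow_add hx]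
    exact ⟨rfl, rfl⟩
  rw [norm_mul, Complex.norm_real, norm_of_nonneg ht.le, norm_DlamStar_ofReal hderiv,
    rpow_neg hx.le, abs_of_pos (inv_pos.2 ha), hpow.1, hpow.2, abs_mul, abs_of_nonneg hk]
  calc t * (a⁻¹ * (k * |(2 * lam + 1) * (a * a) * I x + a * a * x * d|))
      ≤ t * (a⁻¹ * (k * ((2 * lam + 1) * (a * a) * |I x| + a * a * x * |d|))) := by
        gcongr
        refine (abs_add_le _ _).trans (le_of_eq ?_)
        have : 0 ≤ (2 * lam + 1) * (a * a) := mul_nonneg (by linarith) (by positivity)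
        rw [abs_mul _ (I x), abs_mul (a * a * x), abs_of_nonneg this,
          abs_of_nonneg (show 0 ≤ a * a * x by positivity)]
    _ ≤ t * (a⁻¹ * (k * ((2 * lam + 1) * (a * a) *
            (π * ((x - y) ^ 2 + t ^ 2) ^ (-(lam + 1 + 1))) +
          a * a * x * (π * (2 * (lam + 1 + 1) * (x + y) *
            ((x - y) ^ 2 + t ^ 2) ^ (-(lam + 1 + 1) - 1)))))) := by
        have : 0 ≤ 2 * lam + 1 := by linarith
        gcongr
    _ = _ := by
        simp only [k]
        field_simp

def poissonProfile (p s : ℝ) : ℝ := s ^ 2 * (1 + s ^ 2) ^ (-p)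

theorem sq_mul_rpow_neg_sq_add_sq_div_four {M : ℝ} (hM : 0 < M) (t p : ℝ) :
    t ^ 2 * ((M ^ 2 + t ^ 2) / 4) ^ (-p) =
      4 ^ p * M ^ 2 * (M ^ 2) ^ (-p) * poissonProfile p (t / M) := by
  have h : (M ^ 2 + t ^ 2) / 4 = 4⁻¹ * M ^ 2 * (1 + (t / M) ^ 2) := by
    field_simp
  rw [h, mul_rpow (by positivity) (by positivity), mul_rpow (by positivity) (by positivity),
    inv_rpow (by norm_num), rpow_neg (by norm_num : (0 : ℝ) ≤ 4), inv_inv, poissonProfile]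
  field_simp

theorem norm_mul_DlamStar_besselPoissonKernel_le_of_le_two_mul_abs {lam x y t M : ℝ}
    (hlam : 0 ≤ lam) (hx : 0 < x) (hy : 0 < y) (ht : 0 < t) (hxM : x ≤ M) (hyM : y ≤ M)
    (hM : M ≤ 2 * |x - y|) :
    ‖(t : ℂ) * DlamStar lam (fun u => ((besselPoissonKernel (lam + 1) t u y : ℝ) : ℂ)) x‖ ≤
      2 * (lam + 1) * (2 * lam + 1 + 16 * (lam + 1 + 1)) * 4 ^ (lam + 1 + 1) / M *
        poissonProfile (lam + 1 + 1) (t / M) := by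
  set p := lam + 1 + 1
  set Q := (x - y) ^ 2 + t ^ 2
  have hM0 : 0 < M := hx.trans_le hxM
  have hQ : (M ^ 2 + t ^ 2) / 4 ≤ Q := by
    have := pow_le_pow_left₀ hM0.le hM 2
    rw [mul_pow, sq_abs] at this
    nlinarith [sq_nonneg t]
  have hQ0 : 0 < Q := by positivity
  have hratio : x * (x + y) * Q ^ (-p - 1) ≤ 8 * Q ^ (-p) := by
    calc x * (x + y) * Q ^ (-p - 1) = x * (x + y) / Q * Q ^ (-p) := by
          rw [rpow_sub_one hQ0.ne']; ring
      _ ≤ 8 * Q ^ (-p) := by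
          gcongr
          rw [div_le_iff₀ hQ0]
          nlinarith [mul_le_mul hxM hyM hy.le hM0.le]
  have hpow : M ^ lam * M ^ (lam + 1) * (M ^ 2 * (M ^ 2) ^ (-p)) = M⁻¹ := by
    rw [← rpow_natCast M 2, ← rpow_mul hM0.le, ← rpow_add hM0, ← rpow_add hM0, ← rpow_add hM0,
      ← rpow_neg_one]
    congr 1
    push_cast
    ring
  calc _ ≤ 2 * (lam + 1) * t ^ 2 * x ^ lam * y ^ (lam + 1) *
        ((2 * lam + 1) * Q ^ (-p) + 2 * p * (x * (x + y) * Q ^ (-p - 1))) := by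
        refine (norm_mul_DlamStar_besselPoissonKernel_le (by linarith) hx hy ht).trans_eq ?_
        ring
    _ ≤ 2 * (lam + 1) * t ^ 2 * M ^ lam * M ^ (lam + 1) *
        ((2 * lam + 1) * Q ^ (-p) + 2 * p * (8 * Q ^ (-p))) := by
        gcongr
    _ ≤ 2 * (lam + 1) * (2 * lam + 1 + 16 * p) * M ^ lam * M ^ (lam + 1) *
        (t ^ 2 * ((M ^ 2 + t ^ 2) / 4) ^ (-p)) := by
        have := rpow_le_rpow_of_nonpos (by positivity) hQ (by linarith : -p ≤ 0)
        calc _ = 2 * (lam + 1) * (2 * lam + 1 + 16 * p) * M ^ lam * M ^ (lam + 1) *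
              (t ^ 2 * Q ^ (-p)) := by ring
          _ ≤ _ := by gcongr
    _ = _ := by
        rw [sq_mul_rpow_neg_sq_add_sq_div_four hM0]
        linear_combination
          (2 * (lam + 1) * (2 * lam + 1 + 16 * p) * 4 ^ p * poissonProfile p (t / M)) * hpow

theorem integrableOn_poissonProfile_sq_div {p : ℝ} (hp : 1 < p) :
    IntegrableOn (fun s => poissonProfile p s ^ 2 / s) (Ioi 0) := by
  have hg : Integrable fun s : ℝ => (1 + ‖s‖ ^ 2) ^ (-(4 * p - 3) / 2) :=
    integrable_rpow_neg_one_add_norm_sq (by simp; linarith)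
  refine hg.integrableOn.mono'
    (Measurable.aestronglyMeasurable (by unfold poissonProfile; fun_prop)) ?_
  filter_upwards [ae_restrict_mem measurableSet_Ioi] with s (hs : 0 < s)
  have h1 : 0 < 1 + s ^ 2 := by positivity
  have hcube : s ^ 3 ≤ (1 + s ^ 2) ^ (3 / 2 : ℝ) := by
    have : s ^ 3 = (s ^ 2) ^ (3 / 2 : ℝ) := by
      rw [← rpow_natCast s 2, ← rpow_mul hs.le, ← rpow_natCast]
      norm_num
    rw [this]
    exact rpow_le_rpow (by positivity) (by linarith) (by norm_num)
  have heq : poissonProfile p s ^ 2 / s = s ^ 3 * (1 + s ^ 2) ^ (-2 * p) := by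
    rw [poissonProfile, mul_pow, ← rpow_natCast ((1 + s ^ 2) ^ (-p)), ← rpow_mul h1.le]
    field_simp
    ring_nf
  rw [heq, norm_of_nonneg (by positivity), Real.norm_eq_abs, sq_abs,
    show -(4 * p - 3) / 2 = 3 / 2 + -2 * p by ring, rpow_add h1]
  gcongr

theorem max_le_two_mul_abs_sub {x y : ℝ} (hx : 0 < x) (hy : 0 < y)
    (hxy : y < x / 2 ∨ 2 * x < y) : max x y ≤ 2 * |x - y| := by
  rw [max_le_iff]
  rcases hxy with h | h
  · constructor <;> linarith [le_abs_self (x - y)]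
  · constructor <;> linarith [neg_abs_le (x - y)]

theorem setIntegral_Ioi_zero_comp_div {M : ℝ} (hM : 0 < M) (f : ℝ → ℝ) :
    ∫ t in Ioi 0, f (t / M) = M * ∫ s in Ioi 0, f s := by
  simp_rw [div_eq_inv_mul]
  rw [integral_comp_mul_left_Ioi f 0 (inv_pos.2 hM), mul_zero, inv_inv, smul_eq_mul]

theorem sqrt_integral_sq_div_le_of_le_poissonProfile {f : ℝ → ℝ} {p C M : ℝ} (hp : 1 < p)
    (hM : 0 < M) (hC : 0 ≤ C) (hf₀ : ∀ t, 0 ≤ f t)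
    (hf : ∀ t > 0, f t ≤ C / M * poissonProfile p (t / M)) :
    √(∫ t in Ioi 0, f t ^ 2 / t) ≤ C * √(∫ s in Ioi 0, poissonProfile p s ^ 2 / s) / M := by
  set J := ∫ s in Ioi 0, poissonProfile p s ^ 2 / s
  have hJ : 0 ≤ J := setIntegral_nonneg measurableSet_Ioi fun s (hs : 0 < s) => by positivity
  have hint : IntegrableOn (fun t => C ^ 2 / M ^ 3 * (poissonProfile p (t / M) ^ 2 / (t / M)))
      (Ioi 0) := by
    refine Integrable.const_mul ?_ _
    have := integrableOn_poissonProfile_sq_div hp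
    rw [← mul_zero M⁻¹, ← integrableOn_Ioi_comp_mul_left_iff _ _ (inv_pos.2 hM)] at this
    simp only [div_eq_inv_mul] at this ⊢
    exact this
  have hle : ∀ t ∈ Ioi (0 : ℝ),
      f t ^ 2 / t ≤ C ^ 2 / M ^ 3 * (poissonProfile p (t / M) ^ 2 / (t / M)) := by
    intro t (ht : 0 < t)
    calc _ ≤ (C / M * poissonProfile p (t / M)) ^ 2 / t := by gcongr; exacts [hf₀ t, hf t ht]
      _ = _ := by field_simp
  have hbound : ∫ t in Ioi 0, f t ^ 2 / t ≤ (C * √J / M) ^ 2 :=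
    calc _ ≤ ∫ t in Ioi 0, C ^ 2 / M ^ 3 * (poissonProfile p (t / M) ^ 2 / (t / M)) :=
          integral_mono_of_nonneg ((ae_restrict_mem measurableSet_Ioi).mono fun t (ht : 0 < t) =>
            div_nonneg (sq_nonneg _) ht.le) hint ((ae_restrict_mem measurableSet_Ioi).mono hle)
      _ = C ^ 2 / M ^ 3 * (M * J) := by
          rw [integral_const_mul,
            setIntegral_Ioi_zero_comp_div hM fun s => poissonProfile p s ^ 2 / s]
      _ = (C * √J / M) ^ 2 := by
          rw [div_pow, mul_pow C, sq_sqrt hJ]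
          field_simp
  calc _ ≤ √((C * √J / M) ^ 2) := sqrt_le_sqrt hbound
    _ = C * √J / M := sqrt_sq (by positivity)

/-- off-diagonal kernel estimate in the proof of Theorem 1.3:
for `y < x/2` or `y > 2x`, `(∫_0^∞ |t D_{λ,x}* P_t^{λ+1}(x,y)|² dt/t)^{1/2} ≤ C/max(x,y)`. -/
theorem statement13 (lam : ℝ) (hlam : 0 < lam) :
    ∃ C > (0 : ℝ), ∀ x y : ℝ, 0 < x → 0 < y → (y < x / 2 ∨ 2 * x < y) →
      Real.sqrt (∫ t in Set.Ioi (0 : ℝ),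
          ‖(t : ℂ) *
              DlamStar lam (fun u => ((besselPoissonKernel (lam + 1) t u y : ℝ) : ℂ)) x‖ ^ 2
            / t) ≤
        C / max x y := by
  set C₀ := 2 * (lam + 1) * (2 * lam + 1 + 16 * (lam + 1 + 1)) * 4 ^ (lam + 1 + 1)
  set J := ∫ s in Ioi 0, poissonProfile (lam + 1 + 1) s ^ 2 / s
  have hC₀ : 0 < C₀ := by positivity
  refine ⟨C₀ * √J + 1, by positivity, fun x y hx hy hxy => ?_⟩
  have hM : 0 < max x y := lt_max_of_lt_left hx
  calc _ ≤ C₀ * √J / max x y :=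
        sqrt_integral_sq_div_le_of_le_poissonProfile (by linarith) hM hC₀.le
          (fun _ => norm_nonneg _) fun t ht =>
            norm_mul_DlamStar_besselPoissonKernel_le_of_le_two_mul_abs hlam.le hx hy ht
              (le_max_left x y) (le_max_right x y) (max_le_two_mul_abs_sub hx hy hxy)
    _ ≤ (C₀ * √J + 1) / max x y := by gcongr; linarith
end
end

section
/- Let Φ: ℝ → ℂ be measurable with |Φ(u)| ≤ A(1+|u|)^{−3/2} for all u∈ℝ and some A>0. Then there exists C>0, depending only on A, such that for every ε>0 and every z∈ℝ: ( ∫_ε^∞ t^{−3} |Φ(z/t)|² dt )^{1/2} ≤ C / (ε + |z|). -/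
open MeasureTheory Real Set

noncomputable section

/-- uniform tail estimate of Section 2.1: if `|Φ(u)| ≤ A(1+|u|)^{−3/2}`, then
`(∫_ε^∞ t^{−3} |Φ(z/t)|² dt)^{1/2} ≤ C/(ε+|z|)` with `C` depending only on `A`. -/
theorem statement14 (A : ℝ) (hA : 0 < A) :
    ∃ C > (0 : ℝ), ∀ Φ : ℝ → ℂ, Measurable Φ →
      (∀ u : ℝ, ‖Φ u‖ ≤ A * (1 + |u|) ^ (-(3 : ℝ) / 2)) →
      ∀ ε : ℝ, 0 < ε → ∀ z : ℝ,
        Real.sqrt (∫ t in Set.Ioi ε, t ^ (-(3 : ℝ)) * ‖Φ (z / t)‖ ^ 2) ≤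
          C / (ε + |z|) := by
  refine ⟨A, hA, fun Φ hΦm hΦ ε hε z => ?_⟩
  set b : ℝ := ε + |z| with hb_def
  have hb : 0 < b := by positivity
  set f : ℝ → ℝ := fun t => t ^ (-(3 : ℝ)) * ‖Φ (z / t)‖ ^ 2 with hf_def
  set g : ℝ → ℝ := fun t => A ^ 2 * (t + |z|) ^ (-(3 : ℝ)) with hg_def
  -- pointwise bound on Ioi ε
  have hfg : ∀ t ∈ Ioi ε, f t ≤ g t := by
    intro t ht
    have ht0 : 0 < t := hε.trans ht
    have h1 : ‖Φ (z / t)‖ ^ 2 ≤ (A * (1 + |z / t|) ^ (-(3 : ℝ) / 2)) ^ 2 := by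
      have := hΦ (z / t)
      exact pow_le_pow_left₀ (norm_nonneg _) this 2
    have h2 : (A * (1 + |z / t|) ^ (-(3 : ℝ) / 2)) ^ 2
        = A ^ 2 * (1 + |z / t|) ^ (-(3 : ℝ)) := by
      rw [mul_pow, ← Real.rpow_natCast ((1 + |z / t|) ^ (-(3 : ℝ) / 2)) 2,
        ← Real.rpow_mul (by positivity)]
      norm_num
    have h3 : t ^ (-(3 : ℝ)) * (1 + |z / t|) ^ (-(3 : ℝ)) = (t + |z|) ^ (-(3 : ℝ)) := by
      rw [← Real.mul_rpow ht0.le (by positivity)]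
      congr 1
      rw [abs_div, abs_of_pos ht0]
      field_simp
    calc f t ≤ t ^ (-(3 : ℝ)) * (A ^ 2 * (1 + |z / t|) ^ (-(3 : ℝ))) := by
          rw [← h2]
          exact mul_le_mul_of_nonneg_left (h2 ▸ h1) (by positivity)
      _ = A ^ 2 * (t ^ (-(3 : ℝ)) * (1 + |z / t|) ^ (-(3 : ℝ))) := by ring
      _ = g t := by rw [h3]
  -- integrability of g
  have hg_int : IntegrableOn g (Ioi ε) := by
    have h1 : IntegrableOn (fun t : ℝ => t ^ (-(3 : ℝ))) (Ioi ε) :=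
      integrableOn_Ioi_rpow_of_lt (by norm_num) hε
    have hmeas : Measurable g := by
      unfold g; fun_prop
    refine Integrable.mono (h1.const_mul (A ^ 2)) hmeas.aestronglyMeasurable.restrict ?_
    refine (ae_restrict_iff' measurableSet_Ioi).2 (ae_of_all _ fun t ht => ?_)
    have ht0 : 0 < t := hε.trans ht
    have : (t + |z|) ^ (-(3 : ℝ)) ≤ t ^ (-(3 : ℝ)) :=
      Real.rpow_le_rpow_of_nonpos ht0 (le_add_of_nonneg_right (abs_nonneg z)) (by norm_num)
    rw [Real.norm_eq_abs, Real.norm_eq_abs, abs_of_nonneg (by positivity),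
      abs_of_nonneg (by positivity)]
    exact mul_le_mul_of_nonneg_left this (by positivity)
  -- integrability of f
  have hf_meas : Measurable f := by
    unfold f; fun_prop
  have hf_int : IntegrableOn f (Ioi ε) := by
    refine Integrable.mono hg_int hf_meas.aestronglyMeasurable.restrict ?_
    refine (ae_restrict_iff' measurableSet_Ioi).2 (ae_of_all _ fun t ht => ?_)
    have ht0 : 0 < t := hε.trans ht
    rw [Real.norm_eq_abs, Real.norm_eq_abs, abs_of_nonneg (by positivity),
      abs_of_nonneg (by positivity)]
    exact hfg t ht
  -- compute ∫ g
  have hshift : ∫ t in Ioi ε, (t + |z|) ^ (-(3 : ℝ)) = ∫ s in Ioi b, s ^ (-(3 : ℝ)) := by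
    have h := (measurePreserving_add_right (volume : Measure ℝ) |z|).setIntegral_preimage_emb
      (measurableEmbedding_addRight |z|) (fun s => s ^ (-(3 : ℝ))) (Ioi b)
    have hpre : (· + |z|) ⁻¹' (Ioi b) = Ioi ε := by
      ext t
      simp only [mem_preimage, mem_Ioi, hb_def]
      constructor <;> intro h <;> linarith
    rw [hpre] at h
    exact h
  have hgval : ∫ t in Ioi ε, g t = A ^ 2 * (b ^ (-(2 : ℝ)) / 2) := by
    rw [hg_def, integral_const_mul, hshift, integral_Ioi_rpow_of_lt (by norm_num) hb]
    norm_num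
  -- main estimate
  have hle : ∫ t in Ioi ε, f t ≤ (A / b) ^ 2 := by
    have h1 : ∫ t in Ioi ε, f t ≤ ∫ t in Ioi ε, g t :=
      setIntegral_mono_on hf_int hg_int measurableSet_Ioi hfg
    have e : b ^ (-(2 : ℝ)) = (b ^ 2)⁻¹ := by
      rw [Real.rpow_neg hb.le]
      congr 1
      rw [show ((2 : ℝ)) = ((2 : ℕ) : ℝ) by norm_num, Real.rpow_natCast]
    have h2 : A ^ 2 * (b ^ (-(2 : ℝ)) / 2) ≤ (A / b) ^ 2 := by
      rw [e, div_pow, div_eq_mul_inv (A ^ 2)]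
      have hx : (0 : ℝ) ≤ (b ^ 2)⁻¹ := by positivity
      have : (b ^ 2)⁻¹ / 2 ≤ (b ^ 2)⁻¹ := by linarith
      exact mul_le_mul_of_nonneg_left this (by positivity)
    exact h1.trans (hgval ▸ h2)
  calc Real.sqrt (∫ t in Ioi ε, f t) ≤ Real.sqrt ((A / b) ^ 2) := Real.sqrt_le_sqrt hle
    _ = A / b := Real.sqrt_sq (by positivity)
end
end

section
/- Let β>0. There exists C>0 such that for every z∈ℝ, z≠0: ( ∫_0^∞ | t^β ∂_t^β ℙ_t(z) |² dt/t )^{1/2} ≤ C / |z|. -/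
open MeasureTheory Real Set

noncomputable section

/-- The classical Poisson kernel on ℝ: `ℙ_t(z) = (1/π) t/(t²+z²)`. -/
def classicalPoissonKernel (t z : ℝ) : ℝ := (1 / π) * t / (t ^ 2 + z ^ 2)

/-! Partial fractions give `ℙ_t(z) = (2πi)⁻¹ ((z - it)⁻¹ - (z + it)⁻¹)`, hence
`|∂_t^m ℙ_t(z)| ≲ (|z| + t)^{-m-1}`. Inserted into the Segovia–Wheeden integral this gives
`|∂_t^β ℙ_t(z)| ≲ (|z| + t)^{-β-1}`, so the square function is at most a multiple of
`∫_0^∞ t^{2β-1} (|z| + t)^{-2β-2} dt`, which scales like `|z|^{-2}`. Both steps rest on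
`∫_0^∞ s^{r-1} (A + s)^{-q} ds ≤ (1/r + 1/(q-r)) A^{r-q}` for `0 < r < q`, obtained by comparing
the integrand with `s^{r-1} A^{-q}` on `(0, A]` and with `s^{r-1-q}` beyond `A`. -/

lemma integrableOn_and_setIntegral_le_of_le {f g : ℝ → ℝ} {S : Set ℝ} (hS : MeasurableSet S)
    (hf : AEStronglyMeasurable f (volume.restrict S)) (hg : IntegrableOn g S)
    (hf0 : ∀ x ∈ S, 0 ≤ f x) (hfg : ∀ x ∈ S, f x ≤ g x) :
    IntegrableOn f S ∧ ∫ x in S, f x ≤ ∫ x in S, g x := by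
  have hf0' : ∀ᵐ x ∂volume.restrict S, 0 ≤ f x := (ae_restrict_iff' hS).mpr (ae_of_all _ hf0)
  have hfg' : ∀ᵐ x ∂volume.restrict S, f x ≤ g x := (ae_restrict_iff' hS).mpr (ae_of_all _ hfg)
  refine ⟨hg.mono' hf ?_, integral_mono_of_nonneg hf0' hg hfg'⟩
  filter_upwards [hf0', hfg'] with x h0 h1
  rwa [Real.norm_eq_abs, abs_of_nonneg h0]

section BetaTypeIntegral

variable {A r q : ℝ}

lemma measurable_rpow_mul_add_rpow : Measurable fun s : ℝ => s ^ (r - 1) * (A + s) ^ (-q) := by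
  fun_prop

lemma integrableOn_Ioc_zero_rpow_mul_add_rpow_and_le (hA : 0 < A) (hr : 0 < r) (hq : 0 ≤ q) :
    IntegrableOn (fun s => s ^ (r - 1) * (A + s) ^ (-q)) (Ioc 0 A) ∧
      ∫ s in Ioc 0 A, s ^ (r - 1) * (A + s) ^ (-q) ≤ A ^ (r - q) / r := by
  have hint : IntegrableOn (fun s : ℝ => s ^ (r - 1) * A ^ (-q)) (Ioc 0 A) :=
    ((intervalIntegrable_iff_integrableOn_Ioc_of_le hA.le).mp
      (intervalIntegral.intervalIntegrable_rpow' (by linarith))).mul_const _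
  obtain ⟨hI, hle⟩ := integrableOn_and_setIntegral_le_of_le measurableSet_Ioc
    measurable_rpow_mul_add_rpow.aestronglyMeasurable hint
    (fun s hs => by have := hs.1; positivity)
    (fun s hs => mul_le_mul_of_nonneg_left
      (rpow_le_rpow_of_nonpos hA (by linarith [hs.1]) (by linarith)) (by have := hs.1; positivity))
  refine ⟨hI, hle.trans_eq ?_⟩
  rw [integral_mul_const, ← intervalIntegral.integral_of_le hA.le,
    integral_rpow (Or.inl (by linarith)), zero_rpow (by linarith), sub_add_cancel, sub_zero,
    div_mul_eq_mul_div, ← rpow_add hA, sub_eq_add_neg]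

lemma integrableOn_Ioi_self_rpow_mul_add_rpow_and_le (hA : 0 < A) (hq : 0 ≤ q) (hrq : r < q) :
    IntegrableOn (fun s => s ^ (r - 1) * (A + s) ^ (-q)) (Ioi A) ∧
      ∫ s in Ioi A, s ^ (r - 1) * (A + s) ^ (-q) ≤ A ^ (r - q) / (q - r) := by
  obtain ⟨hI, hle⟩ := integrableOn_and_setIntegral_le_of_le measurableSet_Ioi
    measurable_rpow_mul_add_rpow.aestronglyMeasurable
    (integrableOn_Ioi_rpow_of_lt (by linarith : r - 1 - q < -1) hA)
    (fun s hs => by have : 0 < s := hA.trans hs; positivity)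
    (fun s hs => by
      have hs0 : 0 < s := hA.trans hs
      calc s ^ (r - 1) * (A + s) ^ (-q) ≤ s ^ (r - 1) * s ^ (-q) :=
            mul_le_mul_of_nonneg_left (rpow_le_rpow_of_nonpos hs0 (by linarith) (by linarith))
              (by positivity)
        _ = s ^ (r - 1 - q) := by rw [← rpow_add hs0, ← sub_eq_add_neg])
  refine ⟨hI, hle.trans_eq ?_⟩
  rw [integral_Ioi_rpow_of_lt (by linarith) hA, show r - 1 - q + 1 = r - q by ring, neg_div,
    ← div_neg, neg_sub]

lemma integrableOn_Ioi_zero_rpow_mul_add_rpow_and_le (hA : 0 < A) (hr : 0 < r) (hrq : r < q) :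
    IntegrableOn (fun s => s ^ (r - 1) * (A + s) ^ (-q)) (Ioi 0) ∧
      ∫ s in Ioi 0, s ^ (r - 1) * (A + s) ^ (-q) ≤ (1 / r + 1 / (q - r)) * A ^ (r - q) := by
  obtain ⟨hI₁, hle₁⟩ := integrableOn_Ioc_zero_rpow_mul_add_rpow_and_le hA hr (by linarith)
  obtain ⟨hI₂, hle₂⟩ := integrableOn_Ioi_self_rpow_mul_add_rpow_and_le hA (by linarith) hrq
  rw [← Ioc_union_Ioi_eq_Ioi hA.le]
  refine ⟨hI₁.union hI₂, ?_⟩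
  rw [setIntegral_union (Ioc_disjoint_Ioi le_rfl) measurableSet_Ioi hI₁ hI₂]
  linarith [show (1 / r + 1 / (q - r)) * A ^ (r - q) = A ^ (r - q) / r + A ^ (r - q) / (q - r) by
    ring]

end BetaTypeIntegral

lemma iteratedDeriv_inv_affine {w b : ℂ} (h : ∀ u : ℝ, w + b * u ≠ 0) (n : ℕ) :
    iteratedDeriv n (fun u : ℝ => (w + b * u)⁻¹) =
      fun u : ℝ => (-1) ^ n * n.factorial * b ^ n * (w + b * u) ^ (-(n : ℤ) - 1) := by
  induction n with
  | zero => funext u; simp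
  | succ n ih =>
    funext u
    have hlin : HasDerivAt (fun v : ℝ => w + b * v) b u := by
      simpa using ((hasDerivAt_id (u : ℂ)).const_mul b).const_add w |>.comp_ofReal
    have hpow := ((hasDerivAt_zpow (-(n : ℤ) - 1) _ (Or.inl (h u))).comp u hlin).const_mul
      ((-1) ^ n * n.factorial * b ^ n : ℂ)
    rw [iteratedDeriv_succ, ih]
    refine hpow.deriv.trans ?_
    rw [show -(n : ℤ) - 1 - 1 = -((n + 1 : ℕ) : ℤ) - 1 by push_cast; ring, Nat.factorial_succ]
    push_cast
    ring

lemma ofReal_add_mul_ofReal_ne_zero {z : ℝ} (hz : z ≠ 0) {b : ℂ} (hb : b.re = 0) (u : ℝ) :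
    (z : ℂ) + b * u ≠ 0 := fun h => hz <| by
  simpa [hb] using congrArg Complex.re h

lemma Complex.abs_re_add_abs_im_le_two_mul_norm (w : ℂ) : |w.re| + |w.im| ≤ 2 * ‖w‖ := by
  linarith [Complex.abs_re_le_norm w, Complex.abs_im_le_norm w]

lemma classicalPoissonKernel_eq_sub_inv {z : ℝ} (hz : z ≠ 0) (u : ℝ) :
    (classicalPoissonKernel u z : ℂ) =
      (2 * π * Complex.I)⁻¹ * (((z : ℂ) + -Complex.I * u)⁻¹ - ((z : ℂ) + Complex.I * u)⁻¹) := by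
  have h₁ := ofReal_add_mul_ofReal_ne_zero hz (b := -Complex.I) (by simp) u
  have h₂ := ofReal_add_mul_ofReal_ne_zero hz (b := Complex.I) (by simp) u
  have hπ : (π : ℂ) ≠ 0 := by exact_mod_cast pi_ne_zero
  have hprod :
      ((z : ℂ) + -Complex.I * u) * ((z : ℂ) + Complex.I * u) = (u : ℂ) ^ 2 + (z : ℂ) ^ 2 := by
    linear_combination (-(u : ℂ) ^ 2) * Complex.I_sq
  rw [inv_sub_inv h₁ h₂, hprod, classicalPoissonKernel]
  push_cast
  field_simp
  ring

lemma contDiff_inv_affine {w b : ℂ} (h : ∀ u : ℝ, w + b * u ≠ 0) (n : ℕ∞) :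
    ContDiff ℝ n (fun u : ℝ => (w + b * u)⁻¹) :=
  (contDiff_const.add (contDiff_const.mul Complex.ofRealCLM.contDiff)).inv h

lemma norm_ofReal_add_mul_ofReal_zpow_le {z : ℝ} (hz : z ≠ 0) {b : ℂ} (hre : b.re = 0)
    (him : |b.im| = 1) {u : ℝ} (hu : 0 ≤ u) (n : ℕ) :
    ‖((z : ℂ) + b * u) ^ (-(n : ℤ) - 1)‖ ≤ (2 / (|z| + u)) ^ (n + 1) := by
  have hpos : 0 < (|z| + u) / 2 := by positivity
  have hlow : (|z| + u) / 2 ≤ ‖(z : ℂ) + b * u‖ := by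
    have := Complex.abs_re_add_abs_im_le_two_mul_norm ((z : ℂ) + b * u)
    simp only [Complex.add_re, Complex.add_im, Complex.mul_re, Complex.mul_im, Complex.ofReal_re,
      Complex.ofReal_im, hre, mul_zero, zero_mul, sub_zero, add_zero, zero_add, abs_mul, him,
      one_mul, abs_of_nonneg hu] at this
    linarith
  rw [norm_zpow, show -(n : ℤ) - 1 = -((n + 1 : ℕ) : ℤ) by push_cast; ring, zpow_neg, zpow_natCast,
    ← inv_div, inv_pow]
  exact inv_anti₀ (pow_pos hpos _) (pow_le_pow_left₀ hpos.le hlow _)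

lemma norm_iteratedDeriv_classicalPoissonKernel_le {z : ℝ} (hz : z ≠ 0) (m : ℕ) {u : ℝ}
    (hu : 0 ≤ u) :
    ‖iteratedDeriv m (fun v => (classicalPoissonKernel v z : ℂ)) u‖ ≤
      m.factorial * 2 ^ (m + 1) / π * (|z| + u) ^ (-((m : ℝ) + 1)) := by
  have h₁ := ofReal_add_mul_ofReal_ne_zero hz (b := -Complex.I) (by simp)
  have h₂ := ofReal_add_mul_ofReal_ne_zero hz (b := Complex.I) (by simp)
  rw [funext (classicalPoissonKernel_eq_sub_inv hz), iteratedDeriv_const_mul_field,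
    iteratedDeriv_fun_sub (contDiff_inv_affine h₁ m).contDiffAt
      (contDiff_inv_affine h₂ m).contDiffAt,
    iteratedDeriv_inv_affine h₁, iteratedDeriv_inv_affine h₂]
  have k₁ := norm_ofReal_add_mul_ofReal_zpow_le hz (b := -Complex.I) (by simp) (by simp) hu m
  have k₂ := norm_ofReal_add_mul_ofReal_zpow_le hz (b := Complex.I) (by simp) (by simp) hu m
  have hterm : ∀ b : ℂ, ‖b‖ = 1 → ∀ w : ℂ,
      ‖(-1) ^ m * (m.factorial : ℂ) * b ^ m * w‖ = m.factorial * ‖w‖ := by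
    intro b hb w
    simp [hb]
  have hzu : 0 < |z| + u := by positivity
  calc _ ≤ (2 * π)⁻¹ * (m.factorial * (2 / (|z| + u)) ^ (m + 1) +
        m.factorial * (2 / (|z| + u)) ^ (m + 1)) := by
        rw [norm_mul]
        gcongr
        · simp [abs_of_pos pi_pos]
        refine (norm_sub_le _ _).trans (add_le_add ?_ ?_)
        · rw [hterm _ (by simp)]; exact mul_le_mul_of_nonneg_left k₁ (Nat.cast_nonneg _)
        · rw [hterm _ (by simp)]; exact mul_le_mul_of_nonneg_left k₂ (Nat.cast_nonneg _)
    _ = _ := by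
      rw [rpow_neg hzu.le, show (m : ℝ) + 1 = (m + 1 : ℕ) by push_cast; ring, rpow_natCast,
        div_pow]
      field_simp
      ring

lemma norm_fracDeriv_le_of_norm_iteratedDeriv_le {β : ℝ} {m : ℕ} (hβm : β < m) {F : ℝ → ℂ}
    {a B γ : ℝ} (ha : 0 < a) (hB : 0 ≤ B) (hγ : m - β < γ)
    (hF : ∀ u > 0, ‖iteratedDeriv m F u‖ ≤ B * (a + u) ^ (-γ)) {t : ℝ} (ht : 0 ≤ t) :
    ‖fracDeriv β m F t‖ ≤
      B * (1 / (m - β) + 1 / (γ - (m - β))) / Gamma (m - β) * (a + t) ^ (m - β - γ) := by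
  have hr : 0 < (m : ℝ) - β := by linarith
  have hat : 0 < a + t := by linarith
  have hphase : ‖Complex.exp (-(π : ℂ) * Complex.I * ((m : ℂ) - (β : ℂ)))‖ = 1 := by
    rw [show -(π : ℂ) * Complex.I * ((m : ℂ) - (β : ℂ)) = ((-π * (m - β) : ℝ) : ℂ) * Complex.I by
      push_cast; ring]
    exact Complex.norm_exp_ofReal_mul_I _
  obtain ⟨hint, hle⟩ := integrableOn_Ioi_zero_rpow_mul_add_rpow_and_le hat hr hγ
  have hpt : ∀ s ∈ Ioi (0 : ℝ),
      ‖iteratedDeriv m F (t + s) * ((s ^ ((m : ℝ) - β - 1) : ℝ) : ℂ)‖ ≤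
        B * (s ^ ((m : ℝ) - β - 1) * (a + t + s) ^ (-γ)) := by
    intro s hs
    rw [norm_mul, Complex.norm_real, norm_of_nonneg (rpow_nonneg (le_of_lt hs) _), add_assoc]
    calc _ ≤ B * (a + (t + s)) ^ (-γ) * s ^ ((m : ℝ) - β - 1) :=
          mul_le_mul_of_nonneg_right (hF (t + s) (by linarith [mem_Ioi.mp hs]))
            (rpow_nonneg (le_of_lt hs) _)
      _ = _ := by ring
  have hI :
      ‖∫ s in Ioi (0 : ℝ), iteratedDeriv m F (t + s) * ((s ^ ((m : ℝ) - β - 1) : ℝ) : ℂ)‖ ≤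
        B * ((1 / (m - β) + 1 / (γ - (m - β))) * (a + t) ^ (m - β - γ)) := by
    refine (norm_integral_le_integral_norm _).trans ?_
    refine (integral_mono_of_nonneg (ae_of_all _ fun _ => norm_nonneg _) (hint.const_mul B)
      ((ae_restrict_iff' measurableSet_Ioi).mpr (ae_of_all _ hpt))).trans ?_
    rw [integral_const_mul]
    exact mul_le_mul_of_nonneg_left hle hB
  have hΓ := Gamma_pos_of_pos hr
  rw [fracDeriv, norm_mul, norm_div, hphase, Complex.norm_real, norm_of_nonneg hΓ.le]
  calc _ ≤ 1 / Gamma (m - β) *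
        (B * ((1 / (m - β) + 1 / (γ - (m - β))) * (a + t) ^ (m - β - γ))) :=
        mul_le_mul_of_nonneg_left hI (by positivity)
    _ = _ := by ring

lemma setIntegral_norm_rpow_mul_sq_div_le {G : ℝ → ℂ} {β γ a E : ℝ} (hβ : 0 < β) (hβγ : β < γ)
    (ha : 0 < a) (hG : ∀ t > 0, ‖G t‖ ≤ E * (a + t) ^ (-γ)) :
    ∫ t in Ioi 0, ‖((t ^ β : ℝ) : ℂ) * G t‖ ^ 2 / t ≤
      E ^ 2 * (1 / (2 * β) + 1 / (2 * γ - 2 * β)) * a ^ (2 * β - 2 * γ) := by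
  obtain ⟨hint, hle⟩ :=
    integrableOn_Ioi_zero_rpow_mul_add_rpow_and_le ha (by linarith : 0 < 2 * β)
      (by linarith : 2 * β < 2 * γ)
  have hpt : ∀ t ∈ Ioi (0 : ℝ), ‖((t ^ β : ℝ) : ℂ) * G t‖ ^ 2 / t ≤
      E ^ 2 * (t ^ (2 * β - 1) * (a + t) ^ (-(2 * γ))) := by
    intro t ht
    have ht : 0 < t := ht
    have hat : 0 < a + t := by linarith
    rw [norm_mul, Complex.norm_real, norm_of_nonneg (rpow_nonneg ht.le _),
      rpow_sub ht, rpow_one, two_mul, rpow_add ht, show -(2 * γ) = -γ + -γ by ring, rpow_add hat]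
    calc _ ≤ (t ^ β * (E * (a + t) ^ (-γ))) ^ 2 / t := by gcongr; exact hG t ht
      _ = _ := by ring
  refine (integral_mono_of_nonneg
    ((ae_restrict_iff' measurableSet_Ioi).mpr (ae_of_all _ fun t (ht : 0 < t) => by positivity))
    (hint.const_mul _) ((ae_restrict_iff' measurableSet_Ioi).mpr (ae_of_all _ hpt))).trans ?_
  rw [integral_const_mul, mul_assoc]
  exact mul_le_mul_of_nonneg_left hle (sq_nonneg E)

theorem statement16_general (β : ℝ) (hβ : 0 < β)
    (m : ℕ) (hm2 : β < m) :
    ∃ C > (0 : ℝ), ∀ z : ℝ, z ≠ 0 →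
      Real.sqrt (∫ t in Set.Ioi (0 : ℝ),
          ‖((t ^ β : ℝ) : ℂ) *
              fracDeriv β m (fun u => ((classicalPoissonKernel u z : ℝ) : ℂ)) t‖ ^ 2 / t) ≤
        C / |z| := by
  set B : ℝ := m.factorial * 2 ^ (m + 1) / π
  set E : ℝ := B * (1 / (m - β) + 1 / ((m + 1) - (m - β))) / Gamma (m - β)
  set K : ℝ := 1 / (2 * β) + 1 / 2
  have hE : 0 < E := by
    have := Gamma_pos_of_pos (by linarith : 0 < (m : ℝ) - β)
    have : 0 < (m : ℝ) + 1 - (m - β) := by linarith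
    have : 0 < (m : ℝ) - β := by linarith
    positivity
  have hK : 0 < K := by positivity
  refine ⟨E * √K, mul_pos hE (sqrt_pos.mpr hK), fun z hz => ?_⟩
  have ha : 0 < |z| := abs_pos.mpr hz
  have hD : ∀ t > 0, ‖fracDeriv β m (fun u => (classicalPoissonKernel u z : ℂ)) t‖ ≤
      E * (|z| + t) ^ (-(β + 1)) := fun t ht => by
    have := norm_fracDeriv_le_of_norm_iteratedDeriv_le hm2 ha (by positivity) (by linarith)
      (fun u hu => norm_iteratedDeriv_classicalPoissonKernel_le hz m hu.le) ht.le
    rwa [show (m : ℝ) - β - (m + 1) = -(β + 1) by ring] at this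
  have hI := setIntegral_norm_rpow_mul_sq_div_le hβ (by linarith) ha hD
  rw [show 2 * (β + 1) - 2 * β = 2 by ring, show 2 * β - 2 * (β + 1) = -2 by ring] at hI
  calc _ ≤ √(E ^ 2 * K * |z| ^ (-2 : ℝ)) := sqrt_le_sqrt hI
    _ = E * √K / |z| := by
      rw [sqrt_mul (by positivity), sqrt_mul (by positivity), sqrt_sq hE.le, rpow_neg ha.le,
        sqrt_inv, show (2 : ℝ) = (2 : ℕ) by norm_num, rpow_natCast, sqrt_sq ha.le, div_eq_mul_inv]

/-- estimate (3.4) of Section 3.1: for `β>0`,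
`(∫_0^∞ |t^β ∂_t^β ℙ_t(z)|² dt/t)^{1/2} ≤ C/|z|` for `z ≠ 0`. -/
theorem statement16 (β : ℝ) (hβ : 0 < β)
    (m : ℕ) (hm1 : (m : ℝ) - 1 ≤ β) (hm2 : β < m) :
    ∃ C > (0 : ℝ), ∀ z : ℝ, z ≠ 0 →
      Real.sqrt (∫ t in Set.Ioi (0 : ℝ),
          ‖((t ^ β : ℝ) : ℂ) *
              fracDeriv β m (fun u => ((classicalPoissonKernel u z : ℝ) : ℂ)) t‖ ^ 2 / t) ≤
        C / |z| :=
  statement16_general β hβ m hm2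
end
end

section
/- Let 1<p<∞ and let Φ be a Schwartz function on ℝ. There exists C>0 such that for every f ∈ L^p(0,∞): ‖ x ↦ ( ∫_0^∞ | (1/t) ∫_0^∞ Φ((x+y)/t) f(y) dy |² dt/t )^{1/2} ‖_{L^p(0,∞)} ≤ C ‖f‖_{L^p(0,∞)}. -/
/-!
Estimating `|∫ Φ((x+y)/t) f(y) dy| ≤ ∫ |Φ((x+y)/t)| |f(y)| dy` and applying Minkowski's integral
inequality in `L²(dt/t)`, the square function at `x` is at most
`∫₀^∞ |f(y)| (∫₀^∞ |Φ((x+y)/t)|² dt/t³)^{1/2} dy`. The decay `|Φ(z)| ≤ C (1 + z²)⁻¹` bounds the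
inner integral by `C² / (x+y)²`, so the square function is dominated by `C` times Hilbert's
operator `∫₀^∞ |f(y)| / (x+y) dy`. Since `(x+y)⁻¹ ≤ min(x⁻¹, y⁻¹)`, Schur's test with the power
weight `x^{-1/(p p')}` shows that this operator is bounded on `L^p(0,∞)` with norm at most `p p'`.
-/

open MeasureTheory Real Set
open scoped ENNReal

noncomputable section

lemma lintegral_Ioi_rpow_of_lt_neg_one {c a : ℝ} (hc : 0 < c) (ha : a < -1) :
    ∫⁻ t in Ioi c, ENNReal.ofReal (t ^ a) = ENNReal.ofReal (c ^ (a + 1) / (-a - 1)) := by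
  rw [← ofReal_integral_eq_lintegral_ofReal (integrableOn_Ioi_rpow_of_lt ha hc),
    integral_Ioi_rpow_of_lt ha hc]
  · rw [show -a - 1 = -(a + 1) by ring, div_neg, neg_div]
  · filter_upwards [ae_restrict_mem measurableSet_Ioi] with t ht
    exact rpow_nonneg (hc.trans ht).le a

lemma lintegral_Ioc_zero_rpow {x a : ℝ} (hx : 0 < x) (ha : -1 < a) :
    ∫⁻ t in Ioc 0 x, ENNReal.ofReal (t ^ a) = ENNReal.ofReal (x ^ (a + 1) / (a + 1)) := by
  have hint : IntegrableOn (fun t : ℝ => t ^ a) (Ioc 0 x) := by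
    rw [← intervalIntegrable_iff_integrableOn_Ioc_of_le hx.le]
    exact intervalIntegral.intervalIntegrable_rpow' ha
  rw [← ofReal_integral_eq_lintegral_ofReal hint, ← intervalIntegral.integral_of_le hx.le,
    integral_rpow (Or.inl ha), zero_rpow (by linarith), sub_zero]
  filter_upwards [ae_restrict_mem measurableSet_Ioc] with t ht
  exact rpow_nonneg ht.1.le a

/-- Split at `y = x`: below, `(x + y)⁻¹ ≤ x⁻¹`; above, `(x + y)⁻¹ ≤ y⁻¹`. -/
lemma lintegral_Ioi_inv_add_mul_rpow_le {a x : ℝ} (ha₀ : 0 < a) (ha₁ : a < 1) (hx : 0 < x) :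
    ∫⁻ y in Ioi 0, ENNReal.ofReal (x + y)⁻¹ * ENNReal.ofReal y ^ (-a) ≤
      ENNReal.ofReal (a * (1 - a))⁻¹ * ENNReal.ofReal x ^ (-a) := by
  have h_near : ∫⁻ y in Ioc 0 x, ENNReal.ofReal ((x + y)⁻¹ * y ^ (-a)) ≤
      ENNReal.ofReal (x ^ (-a) / (1 - a)) :=
    calc ∫⁻ y in Ioc 0 x, ENNReal.ofReal ((x + y)⁻¹ * y ^ (-a))
        ≤ ∫⁻ y in Ioc 0 x, ENNReal.ofReal x⁻¹ * ENNReal.ofReal (y ^ (-a)) := by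
          refine setLIntegral_mono' measurableSet_Ioc fun y hy => ?_
          rw [← ENNReal.ofReal_mul (by positivity)]
          have := rpow_nonneg hy.1.le (-a)
          gcongr
          linarith [hy.1]
      _ = ENNReal.ofReal (x ^ (-a) / (1 - a)) := by
          rw [lintegral_const_mul' _ _ ENNReal.ofReal_ne_top,
            lintegral_Ioc_zero_rpow hx (by linarith), ← ENNReal.ofReal_mul (by positivity),
            rpow_add hx, rpow_one]
          congr 1
          field_simp
          ring
  have h_far : ∫⁻ y in Ioi x, ENNReal.ofReal ((x + y)⁻¹ * y ^ (-a)) ≤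
      ENNReal.ofReal (x ^ (-a) / a) :=
    calc ∫⁻ y in Ioi x, ENNReal.ofReal ((x + y)⁻¹ * y ^ (-a))
        ≤ ∫⁻ y in Ioi x, ENNReal.ofReal (y ^ (-1 - a)) := by
          refine setLIntegral_mono' measurableSet_Ioi fun y hy => ?_
          have hy₀ : 0 < y := hx.trans hy
          rw [sub_eq_add_neg, rpow_add hy₀, rpow_neg_one]
          have := rpow_nonneg hy₀.le (-a)
          gcongr
          linarith
      _ = ENNReal.ofReal (x ^ (-a) / a) := by
          rw [lintegral_Ioi_rpow_of_lt_neg_one hx (by linarith)]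
          congr 1
          ring_nf
  calc ∫⁻ y in Ioi 0, ENNReal.ofReal (x + y)⁻¹ * ENNReal.ofReal y ^ (-a)
      = ∫⁻ y in Ioi 0, ENNReal.ofReal ((x + y)⁻¹ * y ^ (-a)) := by
        refine setLIntegral_congr_fun measurableSet_Ioi fun y (hy : 0 < y) => ?_
        rw [ENNReal.ofReal_rpow_of_pos hy, ENNReal.ofReal_mul (by positivity)]
    _ ≤ ENNReal.ofReal (x ^ (-a) / (1 - a)) + ENNReal.ofReal (x ^ (-a) / a) := by
        rw [← Ioc_union_Ioi_eq_Ioi hx.le, lintegral_union measurableSet_Ioi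
          (Ioc_disjoint_Ioi le_rfl)]
        exact add_le_add h_near h_far
    _ = ENNReal.ofReal (a * (1 - a))⁻¹ * ENNReal.ofReal x ^ (-a) := by
        have : 0 < 1 - a := by linarith
        rw [← ENNReal.ofReal_add (by positivity) (by positivity), ENNReal.ofReal_rpow_of_pos hx,
          ← ENNReal.ofReal_mul (by positivity)]
        congr 1
        field_simp
        ring

lemma lintegral_Ioi_div_sq_add_sq_sq {s : ℝ} (hs : s ≠ 0) :
    ∫⁻ t in Ioi 0, ENNReal.ofReal (t / (t ^ 2 + s ^ 2) ^ 2) = ENNReal.ofReal (2 * s ^ 2)⁻¹ := by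
  have hderiv (t : ℝ) : HasDerivAt (fun t => -(2 * (t ^ 2 + s ^ 2))⁻¹)
      (t / (t ^ 2 + s ^ 2) ^ 2) t := by
    refine ((((hasDerivAt_pow 2 t).add_const (s ^ 2)).const_mul 2).inv
      (by positivity)).neg.congr_deriv ?_
    have : 0 < t ^ 2 + s ^ 2 := by positivity
    field_simp
    ring
  have hlim : Filter.Tendsto (fun t : ℝ => -(2 * (t ^ 2 + s ^ 2))⁻¹) Filter.atTop (nhds 0) := by
    have h_top : Filter.Tendsto (fun t : ℝ => 2 * (t ^ 2 + s ^ 2)) Filter.atTop Filter.atTop :=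
      (Filter.tendsto_atTop_add_const_right _ _
        (Filter.tendsto_pow_atTop two_ne_zero)).const_mul_atTop two_pos
    simpa using (tendsto_inv_atTop_zero.comp h_top).neg
  have hnonneg (t : ℝ) (ht : t ∈ Ioi 0) : 0 ≤ t / (t ^ 2 + s ^ 2) ^ 2 := by
    have : 0 < t := ht
    positivity
  rw [← ofReal_integral_eq_lintegral_ofReal
      (integrableOn_Ioi_deriv_of_nonneg' (fun t _ => hderiv t) hnonneg hlim)
      ((ae_restrict_mem measurableSet_Ioi).mono hnonneg),
    integral_Ioi_of_hasDerivAt_of_nonneg' (fun t _ => hderiv t) hnonneg hlim]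
  simp

section IntegralInequalities

variable {α β : Type*} [MeasurableSpace α] [MeasurableSpace β] {μ : Measure α} {ν : Measure β}
  {p q : ℝ}

/-- Hölder's inequality for `k F = (k^{1/p} F / v) (k^{1/q} v)`. -/
lemma lintegral_mul_rpow_le_of_weight (hpq : p.HolderConjugate q) {k v F : β → ℝ≥0∞}
    (hk : AEMeasurable k ν) (hv : AEMeasurable v ν) (hF : AEMeasurable F ν)
    (hv_pos : ∀ᵐ y ∂ν, v y ≠ 0 ∧ v y ≠ ∞) :
    (∫⁻ y, k y * F y ∂ν) ^ p ≤
      (∫⁻ y, k y * v y ^ q ∂ν) ^ (p / q) * ∫⁻ y, k y * (F y / v y) ^ p ∂ν := by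
  have hp := hpq.pos
  have hq := hpq.symm.pos
  have h_split : ∀ᵐ y ∂ν,
      k y * F y = (k y ^ (1 / p) * (F y / v y)) * (k y ^ (1 / q) * v y) := by
    filter_upwards [hv_pos] with y ⟨hv0, hvtop⟩
    calc k y * F y = (k y ^ (1 / p) * k y ^ (1 / q)) * (F y / v y * v y) := by
          rw [← ENNReal.rpow_add_of_nonneg _ _ (by positivity) (by positivity), one_div, one_div,
            hpq.inv_add_inv_eq_one, ENNReal.rpow_one, ENNReal.div_mul_cancel hv0 hvtop]
      _ = _ := by ring
  have h_pow (c : ℝ≥0∞) {r : ℝ} (hr : 0 < r) (z : ℝ≥0∞) : (c ^ (1 / r) * z) ^ r = c * z ^ r := by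
    rw [ENNReal.mul_rpow_of_nonneg _ _ hr.le, ← ENNReal.rpow_mul, one_div_mul_cancel hr.ne',
      ENNReal.rpow_one]
  have holder := ENNReal.lintegral_mul_le_Lp_mul_Lq ν hpq
    ((hk.pow_const (1 / p)).mul (hF.div hv)) ((hk.pow_const (1 / q)).mul hv)
  simp only [Pi.mul_apply, h_pow _ hp, h_pow _ hq] at holder
  calc (∫⁻ y, k y * F y ∂ν) ^ p
      ≤ ((∫⁻ y, k y * (F y / v y) ^ p ∂ν) ^ (1 / p) * (∫⁻ y, k y * v y ^ q ∂ν) ^ (1 / q)) ^ p :=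
        ENNReal.rpow_le_rpow ((lintegral_congr_ae h_split).le.trans holder) hp.le
    _ = _ := by
        rw [ENNReal.mul_rpow_of_nonneg _ _ hp.le, ← ENNReal.rpow_mul, ← ENNReal.rpow_mul,
          one_div_mul_cancel hp.ne', ENNReal.rpow_one, one_div_mul_eq_div, mul_comm]

theorem lintegral_rpow_lintegral_mul_le_of_schur [SFinite μ] [SFinite ν]
    (hpq : p.HolderConjugate q) {K : α → β → ℝ≥0∞} (hK : Measurable (Function.uncurry K))
    {u : α → ℝ≥0∞} {v : β → ℝ≥0∞} (hu : Measurable u) (hv : Measurable v)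
    (hv_pos : ∀ᵐ y ∂ν, v y ≠ 0 ∧ v y ≠ ∞) {A B : ℝ≥0∞}
    (hA : ∀ᵐ x ∂μ, ∫⁻ y, K x y * v y ^ q ∂ν ≤ A * u x ^ q)
    (hB : ∀ᵐ y ∂ν, ∫⁻ x, K x y * u x ^ p ∂μ ≤ B * v y ^ p) {F : β → ℝ≥0∞} (hF : Measurable F) :
    ∫⁻ x, (∫⁻ y, K x y * F y ∂ν) ^ p ∂μ ≤ A ^ (p / q) * B * ∫⁻ y, F y ^ p ∂ν := by
  have hp := hpq.pos
  have hq := hpq.symm.pos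
  have hK_left (x : α) : Measurable (K x) := hK.comp measurable_prodMk_left
  have hG : Measurable fun y => (F y / v y) ^ p := (hF.div hv).pow_const p
  calc ∫⁻ x, (∫⁻ y, K x y * F y ∂ν) ^ p ∂μ
      ≤ ∫⁻ x, A ^ (p / q) * (u x ^ p * ∫⁻ y, K x y * (F y / v y) ^ p ∂ν) ∂μ := by
        refine lintegral_mono_ae ?_
        filter_upwards [hA] with x hx
        grw [lintegral_mul_rpow_le_of_weight hpq (hK_left x).aemeasurable hv.aemeasurable
          hF.aemeasurable hv_pos, hx, ENNReal.mul_rpow_of_nonneg _ _ (by positivity),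
          ← ENNReal.rpow_mul, mul_div_cancel₀ _ hq.ne', mul_assoc]
    _ = A ^ (p / q) * ∫⁻ y, (F y / v y) ^ p * ∫⁻ x, K x y * u x ^ p ∂μ ∂ν := by
        have hKG : Measurable (Function.uncurry fun x y => K x y * (F y / v y) ^ p) :=
          hK.mul (hG.comp measurable_snd)
        have hInner : Measurable fun x => u x ^ p * ∫⁻ y, K x y * (F y / v y) ^ p ∂ν :=
          (hu.pow_const p).mul hKG.lintegral_prod_right
        rw [lintegral_const_mul _ hInner]
        congr 1
        calc ∫⁻ x, u x ^ p * ∫⁻ y, K x y * (F y / v y) ^ p ∂ν ∂μ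
            = ∫⁻ x, ∫⁻ y, (F y / v y) ^ p * (K x y * u x ^ p) ∂ν ∂μ := by
              refine lintegral_congr fun x => ?_
              have hKx : Measurable fun y => K x y * (F y / v y) ^ p := (hK_left x).mul hG
              rw [← lintegral_const_mul _ hKx]
              exact lintegral_congr fun y => by ring
          _ = ∫⁻ y, ∫⁻ x, (F y / v y) ^ p * (K x y * u x ^ p) ∂μ ∂ν :=
              lintegral_lintegral_swap ((hG.comp measurable_snd).mul
                (hK.mul ((hu.pow_const p).comp measurable_fst))).aemeasurable
          _ = _ := lintegral_congr fun y => by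
              have hKy : Measurable fun x => K x y * u x ^ p :=
                (hK.comp measurable_prodMk_right).mul (hu.pow_const p)
              rw [lintegral_const_mul _ hKy]
    _ ≤ A ^ (p / q) * ∫⁻ y, (F y / v y) ^ p * (B * v y ^ p) ∂ν :=
        mul_le_mul_right (lintegral_mono_ae (hB.mono fun y hy => by gcongr)) _
    _ = A ^ (p / q) * ∫⁻ y, B * F y ^ p ∂ν := by
        congr 1
        refine lintegral_congr_ae ?_
        filter_upwards [hv_pos] with y ⟨hv0, hvtop⟩
        rw [mul_left_comm, ← ENNReal.mul_rpow_of_nonneg _ _ hpq.nonneg,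
          ENNReal.div_mul_cancel hv0 hvtop]
    _ = A ^ (p / q) * B * ∫⁻ y, F y ^ p ∂ν := by
        rw [lintegral_const_mul _ (hF.pow_const p), mul_assoc]

/-- Minkowski's integral inequality for the exponent `2`: expand the square as an integral over
`ν × ν` and apply Cauchy–Schwarz in `t`. -/
theorem lintegral_sq_lintegral_le [SFinite μ] [SFinite ν] {g : α → β → ℝ≥0∞}
    (hg : Measurable (Function.uncurry g)) :
    ∫⁻ t, (∫⁻ y, g t y ∂ν) ^ 2 ∂μ ≤ (∫⁻ y, (∫⁻ t, g t y ^ 2 ∂μ) ^ (2⁻¹ : ℝ) ∂ν) ^ 2 := by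
  set S : β → ℝ≥0∞ := fun y => (∫⁻ t, g t y ^ 2 ∂μ) ^ (2⁻¹ : ℝ)
  have hS : Measurable S := (hg.pow_const 2).lintegral_prod_left.pow_const _
  have hg_left (t : α) : Measurable (g t) := hg.comp measurable_prodMk_left
  have hg_right (y : β) : Measurable fun t => g t y := hg.comp measurable_prodMk_right
  have cauchy_schwarz (y₁ y₂ : β) : ∫⁻ t, g t y₁ * g t y₂ ∂μ ≤ S y₁ * S y₂ := by
    simpa [S, ENNReal.rpow_two] using ENNReal.lintegral_mul_le_Lp_mul_Lq μ
      Real.HolderConjugate.two_two (hg_right y₁).aemeasurable (hg_right y₂).aemeasurable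
  calc ∫⁻ t, (∫⁻ y, g t y ∂ν) ^ 2 ∂μ
      = ∫⁻ t, ∫⁻ z, g t z.1 * g t z.2 ∂ν.prod ν ∂μ := by
        simp_rw [lintegral_prod_mul (hg_left _).aemeasurable (hg_left _).aemeasurable, sq]
    _ = ∫⁻ z, ∫⁻ t, g t z.1 * g t z.2 ∂μ ∂ν.prod ν :=
        lintegral_lintegral_swap ((hg.comp (measurable_fst.prodMk
          (measurable_fst.comp measurable_snd))).mul (hg.comp (measurable_fst.prodMk
          (measurable_snd.comp measurable_snd)))).aemeasurable
    _ ≤ ∫⁻ z, S z.1 * S z.2 ∂ν.prod ν := lintegral_mono fun z => cauchy_schwarz z.1 z.2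
    _ = (∫⁻ y, S y ∂ν) ^ 2 := by
        rw [lintegral_prod_mul hS.aemeasurable hS.aemeasurable, sq]

end IntegralInequalities

def hilbertOp (F : ℝ → ℝ≥0∞) (x : ℝ) : ℝ≥0∞ :=
  ∫⁻ y in Ioi 0, ENNReal.ofReal (x + y)⁻¹ * F y

theorem lintegral_hilbertOp_rpow_le {p q : ℝ} (hpq : p.HolderConjugate q) {F : ℝ → ℝ≥0∞}
    (hF : Measurable F) :
    ∫⁻ x in Ioi 0, hilbertOp F x ^ p ≤ ENNReal.ofReal (p * q) ^ p * ∫⁻ y in Ioi 0, F y ^ p := by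
  have hp := hpq.pos
  have hq := hpq.symm.pos
  set w : ℝ → ℝ≥0∞ := fun x => ENNReal.ofReal x ^ (-(p * q)⁻¹)
  have hw_pos : ∀ᵐ y ∂volume.restrict (Ioi 0), w y ≠ 0 ∧ w y ≠ ∞ := by
    filter_upwards [ae_restrict_mem measurableSet_Ioi] with y (hy : 0 < y)
    exact ⟨by simp [w, hy], by simp [w, hy]⟩
  have hw_pow {r s : ℝ} (hr : 0 < r) (hs : 0 < s) (hrs : r * s = p * q) (x : ℝ) :
      w x ^ r = ENNReal.ofReal x ^ (-s⁻¹) := by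
    rw [← ENNReal.rpow_mul, ← hrs]
    field_simp
  have hK_bound {r s : ℝ} (hrs : r.HolderConjugate s) (x : ℝ) (hx : 0 < x) :
      ∫⁻ y in Ioi 0, ENNReal.ofReal (x + y)⁻¹ * ENNReal.ofReal y ^ (-r⁻¹) ≤
        ENNReal.ofReal (r * s) * ENNReal.ofReal x ^ (-r⁻¹) := by
    have h := lintegral_Ioi_inv_add_mul_rpow_le (inv_pos.2 hrs.pos)
      (inv_lt_one_of_one_lt₀ hrs.lt) hx
    rwa [← hrs.inv_add_inv_eq_one, add_sub_cancel_left, mul_inv, inv_inv, inv_inv] at h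
  have hA : ∀ᵐ x ∂volume.restrict (Ioi 0),
      ∫⁻ y in Ioi 0, ENNReal.ofReal (x + y)⁻¹ * w y ^ q ≤ ENNReal.ofReal (p * q) * w x ^ q := by
    filter_upwards [ae_restrict_mem measurableSet_Ioi] with x (hx : 0 < x)
    simp only [hw_pow hq hp (mul_comm q p)]
    exact hK_bound hpq x hx
  have hB : ∀ᵐ y ∂volume.restrict (Ioi 0),
      ∫⁻ x in Ioi 0, ENNReal.ofReal (x + y)⁻¹ * w x ^ p ≤ ENNReal.ofReal (p * q) * w y ^ p := by
    filter_upwards [ae_restrict_mem measurableSet_Ioi] with y (hy : 0 < y)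
    simp only [hw_pow hp hq rfl, add_comm _ y, mul_comm p q]
    exact hK_bound hpq.symm y hy
  calc ∫⁻ x in Ioi 0, hilbertOp F x ^ p
      ≤ ENNReal.ofReal (p * q) ^ (p / q) * ENNReal.ofReal (p * q) * ∫⁻ y in Ioi 0, F y ^ p :=
        lintegral_rpow_lintegral_mul_le_of_schur hpq (by fun_prop) (by fun_prop) (by fun_prop)
          hw_pos hA hB hF
    _ = ENNReal.ofReal (p * q) ^ p * ∫⁻ y in Ioi 0, F y ^ p := by
        nth_rw 2 [← ENNReal.rpow_one (ENNReal.ofReal (p * q))]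
        rw [← ENNReal.rpow_add_of_nonneg _ _ (by positivity) zero_le_one,
          hpq.div_conj_eq_sub_one, sub_add_cancel]

theorem eLpNorm_hilbertOp_le {p q : ℝ} (hpq : p.HolderConjugate q) {F : ℝ → ℝ≥0∞}
    (hF : AEMeasurable F (volume.restrict (Ioi 0))) :
    eLpNorm (hilbertOp F) (ENNReal.ofReal p) (volume.restrict (Ioi 0)) ≤
      ENNReal.ofReal (p * q) * eLpNorm F (ENNReal.ofReal p) (volume.restrict (Ioi 0)) := by
  have hp := hpq.pos
  have h_mk : hilbertOp F = hilbertOp (hF.mk F) := funext fun x =>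
    lintegral_congr_ae (hF.ae_eq_mk.mono fun y hy => by simp only [hy])
  rw [h_mk, eLpNorm_congr_ae hF.ae_eq_mk, eLpNorm_eq_lintegral_rpow_enorm_toReal (by simpa)
    ENNReal.ofReal_ne_top, eLpNorm_eq_lintegral_rpow_enorm_toReal (by simpa)
    ENNReal.ofReal_ne_top, ENNReal.toReal_ofReal hp.le]
  simp only [enorm_eq_self]
  calc (∫⁻ x in Ioi 0, hilbertOp (hF.mk F) x ^ p) ^ (1 / p)
      ≤ (ENNReal.ofReal (p * q) ^ p * ∫⁻ y in Ioi 0, hF.mk F y ^ p) ^ (1 / p) :=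
        ENNReal.rpow_le_rpow (lintegral_hilbertOp_rpow_le hpq hF.measurable_mk) (by positivity)
    _ = _ := by
        rw [ENNReal.mul_rpow_of_nonneg _ _ (by positivity), ← ENNReal.rpow_mul,
          mul_one_div_cancel hp.ne', ENNReal.rpow_one]

namespace SchwartzMap

variable {E : Type*} [NormedAddCommGroup E] [NormedSpace ℝ E]

lemma exists_one_add_sq_mul_norm_le (Φ : 𝓢(ℝ, E)) : ∃ C > 0, ∀ z : ℝ, (1 + z ^ 2) * ‖Φ z‖ ≤ C := by
  obtain ⟨C₀, hC₀, h₀⟩ := Φ.decay 0 0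
  obtain ⟨C₂, hC₂, h₂⟩ := Φ.decay 2 0
  refine ⟨C₀ + C₂, by positivity, fun z => ?_⟩
  have := h₀ z
  have := h₂ z
  simp only [pow_zero, one_mul, norm_iteratedFDeriv_zero, Real.norm_eq_abs, sq_abs] at *
  linarith

/-- The decay `‖Φ z‖ ≤ C (1 + z²)⁻¹` reduces the bound to `∫₀^∞ t / (t² + s²)² dt = 1 / (2 s²)`. -/
lemma exists_lintegral_sq_le (Φ : 𝓢(ℝ, E)) : ∃ C > 0, ∀ s > 0,
    ∫⁻ t in Ioi 0, ENNReal.ofReal t⁻¹ * (ENNReal.ofReal t⁻¹ * ‖Φ (s / t)‖ₑ) ^ 2 ≤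
      ENNReal.ofReal (C / s) ^ 2 := by
  obtain ⟨C, hC, hΦ⟩ := Φ.exists_one_add_sq_mul_norm_le
  refine ⟨C, hC, fun s hs => ?_⟩
  have h_pt (t : ℝ) (ht : 0 < t) :
      t⁻¹ * (t⁻¹ * ‖Φ (s / t)‖) ^ 2 ≤ C ^ 2 * (t / (t ^ 2 + s ^ 2) ^ 2) := by
    have h := hΦ (s / t)
    have h' : t⁻¹ * ‖Φ (s / t)‖ ≤ C * (t / (t ^ 2 + s ^ 2)) := by
      rw [div_pow, one_add_div (by positivity), ← le_div_iff₀' (by positivity)] at h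
      calc t⁻¹ * ‖Φ (s / t)‖ ≤ t⁻¹ * (C / ((t ^ 2 + s ^ 2) / t ^ 2)) := by gcongr
        _ = C * (t / (t ^ 2 + s ^ 2)) := by field_simp
    calc t⁻¹ * (t⁻¹ * ‖Φ (s / t)‖) ^ 2 ≤ t⁻¹ * (C * (t / (t ^ 2 + s ^ 2))) ^ 2 := by gcongr
      _ = _ := by field_simp
  calc ∫⁻ t in Ioi 0, ENNReal.ofReal t⁻¹ * (ENNReal.ofReal t⁻¹ * ‖Φ (s / t)‖ₑ) ^ 2
      ≤ ∫⁻ t in Ioi 0, ENNReal.ofReal (C ^ 2) * ENNReal.ofReal (t / (t ^ 2 + s ^ 2) ^ 2) := by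
        refine setLIntegral_mono' measurableSet_Ioi fun t (ht : 0 < t) => ?_
        rw [← ofReal_norm, ← ENNReal.ofReal_mul (by positivity),
          ← ENNReal.ofReal_pow (by positivity), ← ENNReal.ofReal_mul (by positivity),
          ← ENNReal.ofReal_mul (by positivity)]
        exact ENNReal.ofReal_le_ofReal (h_pt t ht)
    _ = ENNReal.ofReal (C ^ 2 * (2 * s ^ 2)⁻¹) := by
        rw [lintegral_const_mul _ (by fun_prop), lintegral_Ioi_div_sq_add_sq_sq hs.ne',
          ENNReal.ofReal_mul (by positivity)]
    _ ≤ ENNReal.ofReal (C / s) ^ 2 := by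
        rw [← ENNReal.ofReal_pow (by positivity)]
        refine ENNReal.ofReal_le_ofReal ?_
        rw [div_pow, div_eq_mul_inv]
        gcongr
        linarith [sq_nonneg s]

theorem exists_lintegral_sq_le_hilbertOp (Φ : 𝓢(ℝ, E)) : ∃ C > 0, ∀ F : ℝ → ℝ≥0∞,
    AEMeasurable F (volume.restrict (Ioi 0)) → ∀ x > 0,
      ∫⁻ t in Ioi 0, ENNReal.ofReal t⁻¹ *
          (ENNReal.ofReal t⁻¹ * ∫⁻ y in Ioi 0, ‖Φ ((x + y) / t)‖ₑ * F y) ^ 2 ≤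
        (ENNReal.ofReal C * hilbertOp F x) ^ 2 := by
  obtain ⟨C, hC, h_kernel⟩ := Φ.exists_lintegral_sq_le
  refine ⟨C, hC, fun F hF x hx => ?_⟩
  wlog hFm : Measurable F generalizing F with H
  · have h_mk (k : ℝ → ℝ≥0∞) : ∫⁻ y in Ioi 0, k y * F y = ∫⁻ y in Ioi 0, k y * hF.mk F y :=
      lintegral_congr_ae (hF.ae_eq_mk.mono fun y hy => by simp only [hy])
    simpa only [hilbertOp, h_mk] using H _ hF.measurable_mk.aemeasurable hF.measurable_mk
  set μ := (volume.restrict (Ioi 0)).withDensity fun t => ENNReal.ofReal t⁻¹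
  set g : ℝ → ℝ → ℝ≥0∞ := fun t y => ENNReal.ofReal t⁻¹ * ‖Φ ((x + y) / t)‖ₑ * F y
  have hΦ : StronglyMeasurable Φ := Φ.continuous.stronglyMeasurable
  have hg : Measurable (Function.uncurry g) :=
    show Measurable fun z : ℝ × ℝ => ENNReal.ofReal z.1⁻¹ * ‖Φ ((x + z.2) / z.1)‖ₑ * F z.2 by
      fun_prop
  calc ∫⁻ t in Ioi 0, ENNReal.ofReal t⁻¹ *
          (ENNReal.ofReal t⁻¹ * ∫⁻ y in Ioi 0, ‖Φ ((x + y) / t)‖ₑ * F y) ^ 2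
      = ∫⁻ t, (∫⁻ y in Ioi 0, g t y) ^ 2 ∂μ := by
        rw [lintegral_withDensity_eq_lintegral_mul _ (by fun_prop)
          ((hg.lintegral_prod_right).pow_const 2)]
        refine lintegral_congr fun t => ?_
        simp only [g, Pi.mul_apply, mul_assoc, lintegral_const_mul' _ _ ENNReal.ofReal_ne_top]
    _ ≤ (∫⁻ y in Ioi 0, (∫⁻ t, g t y ^ 2 ∂μ) ^ (2⁻¹ : ℝ)) ^ 2 := lintegral_sq_lintegral_le hg
    _ ≤ (∫⁻ y in Ioi 0, ENNReal.ofReal C * (ENNReal.ofReal (x + y)⁻¹ * F y)) ^ 2 := by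
        gcongr 1
        refine setLIntegral_mono' measurableSet_Ioi fun y (hy : 0 < y) => ?_
        calc (∫⁻ t, g t y ^ 2 ∂μ) ^ (2⁻¹ : ℝ)
            = ((∫⁻ t in Ioi 0, ENNReal.ofReal t⁻¹ *
                (ENNReal.ofReal t⁻¹ * ‖Φ ((x + y) / t)‖ₑ) ^ 2) * F y ^ 2) ^ (2⁻¹ : ℝ) := by
              rw [lintegral_withDensity_eq_lintegral_mul _ (by fun_prop) (by fun_prop),
                ← lintegral_mul_const _ (by fun_prop)]
              congr 2 with t
              simp only [g, Pi.mul_apply]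
              ring
          _ ≤ (ENNReal.ofReal (C / (x + y)) ^ 2 * F y ^ 2) ^ (2⁻¹ : ℝ) := by
              gcongr
              exact h_kernel _ (by positivity)
          _ = ENNReal.ofReal C * (ENNReal.ofReal (x + y)⁻¹ * F y) := by
              rw [← mul_pow, div_eq_mul_inv, ENNReal.ofReal_mul hC.le, mul_assoc]
              simpa using ENNReal.pow_rpow_inv_natCast two_ne_zero _
    _ = (ENNReal.ofReal C * hilbertOp F x) ^ 2 := by
        rw [lintegral_const_mul' _ _ ENNReal.ofReal_ne_top, hilbertOp]

end SchwartzMap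

lemma ofReal_setIntegral_norm_sq_le_lintegral (Φ f : ℝ → ℂ) (x : ℝ) :
    ENNReal.ofReal (∫ t in Ioi (0 : ℝ),
        ‖(1 / (t : ℂ)) * ∫ y in Ioi (0 : ℝ), Φ ((x + y) / t) * f y‖ ^ 2 / t) ≤
      ∫⁻ t in Ioi 0, ENNReal.ofReal t⁻¹ *
        (ENNReal.ofReal t⁻¹ * ∫⁻ y in Ioi 0, ‖Φ ((x + y) / t)‖ₑ * ‖f y‖ₑ) ^ 2 := by
  refine (Real.ofReal_le_enorm _).trans <| (enorm_integral_le_lintegral_enorm _).trans <|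
    setLIntegral_mono' measurableSet_Ioi fun t (ht : 0 < t) => ?_
  have h_norm : ‖(1 / (t : ℂ)) * ∫ y in Ioi (0 : ℝ), Φ ((x + y) / t) * f y‖ ^ 2 / t =
      t⁻¹ * (t⁻¹ * ‖∫ y in Ioi (0 : ℝ), Φ ((x + y) / t) * f y‖) ^ 2 := by
    rw [norm_mul, one_div, norm_inv, Complex.norm_real, Real.norm_of_nonneg ht.le]
    ring
  rw [h_norm, Real.enorm_of_nonneg (by positivity), ENNReal.ofReal_mul (by positivity),
    ENNReal.ofReal_pow (by positivity), ENNReal.ofReal_mul (by positivity), ofReal_norm]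
  gcongr
  simpa only [enorm_mul] using
    enorm_integral_le_lintegral_enorm (μ := volume.restrict (Ioi 0)) fun y => Φ ((x + y) / t) * f y

/-- boundedness of the reflected operator `L¹_Φ` of Section 2.1, scalar case:
for a Schwartz function `Φ`,
`‖x ↦ (∫_0^∞ |(1/t)∫_0^∞ Φ((x+y)/t) f(y) dy|² dt/t)^{1/2}‖_{L^p(0,∞)} ≤ C ‖f‖_{L^p(0,∞)}`. -/
theorem statement18 (p : ℝ) (hp : 1 < p) (Φ : SchwartzMap ℝ ℂ) :
    ∃ C > (0 : ℝ), ∀ f : ℝ → ℂ,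
      MemLp f (ENNReal.ofReal p) (volume.restrict (Set.Ioi 0)) →
      eLpNorm (fun x => Real.sqrt (∫ t in Set.Ioi (0 : ℝ),
            ‖(1 / (t : ℂ)) * ∫ y in Set.Ioi (0 : ℝ), Φ ((x + y) / t) * f y‖ ^ 2 / t))
          (ENNReal.ofReal p) (volume.restrict (Set.Ioi 0)) ≤
        ENNReal.ofReal C *
          eLpNorm f (ENNReal.ofReal p) (volume.restrict (Set.Ioi 0)) := by
  have hpq := Real.HolderConjugate.conjExponent hp
  obtain ⟨C, hC, h_sq⟩ := Φ.exists_lintegral_sq_le_hilbertOp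
  refine ⟨C * (p * p.conjExponent), mul_pos hC (mul_pos hpq.pos hpq.symm.pos), fun f hf => ?_⟩
  have hF : AEMeasurable (fun y => ‖f y‖ₑ) (volume.restrict (Ioi 0)) :=
    hf.aestronglyMeasurable.enorm
  have h_pt : ∀ᵐ x ∂volume.restrict (Ioi 0), ‖Real.sqrt (∫ t in Set.Ioi (0 : ℝ),
      ‖(1 / (t : ℂ)) * ∫ y in Set.Ioi (0 : ℝ), Φ ((x + y) / t) * f y‖ ^ 2 / t)‖ₑ ≤
        C.toNNReal * ‖hilbertOp (fun y => ‖f y‖ₑ) x‖ₑ := by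
    filter_upwards [ae_restrict_mem measurableSet_Ioi] with x (hx : 0 < x)
    rw [enorm_eq_self, Real.enorm_of_nonneg (sqrt_nonneg _),
      ← ENNReal.pow_le_pow_left_iff two_ne_zero, ← ENNReal.ofReal_pow (sqrt_nonneg _),
      sq_sqrt (setIntegral_nonneg measurableSet_Ioi fun t (ht : 0 < t) => by positivity)]
    exact (ofReal_setIntegral_norm_sq_le_lintegral Φ f x).trans (h_sq _ hF x hx)
  calc _ ≤ ENNReal.ofReal C * eLpNorm (hilbertOp fun y => ‖f y‖ₑ) (ENNReal.ofReal p)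
        (volume.restrict (Ioi 0)) := eLpNorm_le_mul_eLpNorm_of_ae_le_mul' h_pt _
    _ ≤ ENNReal.ofReal C * (ENNReal.ofReal (p * p.conjExponent) *
        eLpNorm (fun y => ‖f y‖ₑ) (ENNReal.ofReal p) (volume.restrict (Ioi 0))) := by
        gcongr
        exact eLpNorm_hilbertOp_le hpq hF
    _ = _ := by rw [eLpNorm_enorm, ENNReal.ofReal_mul hC.le, mul_assoc]
end
end
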